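/- arXiv:1607.07830 — 5 statements merged into one kernel-verified Lean document; each statement's English description precedes it below -/
import Mathlib

section
/- (Abstract form of Proposition 3.1, first part.) For every continuous compactly supported bi-K-invariant function f: G → ℂ and all ξ, η ∈ L²(X, ν), one has ∫_G f(g) ⟨π_ν(g)ξ, η⟩ dμ_G(g) = ⟨ξ, 1⟩ · ⟨1, η⟩ · ∫_G f(g) Ξ(g) dμ_G(g), where ⟨ξ, 1⟩ = ∫_X ξ dν, ⟨1, η⟩ = ∫_X conj(η) dν, and 1 denotes the constant function 1 on X. -/
/-!
Average over `K` on both sides. Since `f` is bi-`K`-invariant and `μ_G` is invariant under left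
and, `K` being compact, right translations by `K`, the matrix coefficient
`g ↦ ⟨π_ν(g)ξ, η⟩` may be replaced by its average over `k g k'`. The Radon–Nikodym cocycle
identity turns the average over `k` into an average of `η` over `K`-orbits and the average over
`k'` into one of `ξ`; by ergodicity these orbit averages are the constants `⟨1, η⟩` and `⟨ξ, 1⟩`,
and what remains is `⟨ξ, 1⟩ ⟨1, η⟩ ⟨π_ν(g)1, 1⟩ = ⟨ξ, 1⟩ ⟨1, η⟩ Ξ(g)`.
-/

open MeasureTheory ENNReal Function Filter Set
open scoped Pointwise

theorem measurePreserving_uncurry {α β : Type*} [MeasurableSpace α] [MeasurableSpace β]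
    {μα : Measure α} [IsProbabilityMeasure μα] {μ : Measure β} [SFinite μ] {T : α → β → β}
    (hT : Measurable (uncurry T)) (h : ∀ a, MeasurePreserving (T a) μ μ) :
    MeasurePreserving (uncurry T) (μα.prod μ) μ := by
  refine ⟨hT, Measure.ext fun s hs => ?_⟩
  rw [Measure.map_apply hT hs, Measure.prod_apply (hT hs)]
  simp_rw [preimage_preimage]
  simp [(h _).measure_preimage hs.nullMeasurableSet]

theorem integral_eq_integral_integral_comp {α β E : Type*} [MeasurableSpace α] [MeasurableSpace β]
    [NormedAddCommGroup E] [NormedSpace ℝ E]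
    {μα : Measure α} [IsProbabilityMeasure μα] {μ : Measure β} [SFinite μ] {T : α → β → β}
    (hT : Measurable (uncurry T)) (h : ∀ a, MeasurePreserving (T a) μ μ) {F : β → E}
    (hF : Integrable F μ) :
    ∫ y, F y ∂μ = ∫ y, ∫ a, F (T a y) ∂μα ∂μ := by
  have hTμ := measurePreserving_uncurry (μα := μα) hT h
  rw [← integral_prod_symm (fun p => F (T p.1 p.2)) (hTμ.integrable_comp_of_integrable hF)]
  have := integral_map hT.aemeasurable (hTμ.map_eq ▸ hF.aestronglyMeasurable)
  rwa [hTμ.map_eq] at this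

theorem integral_mul_eq_integral_mul_integral_comp {α β : Type*} [MeasurableSpace α]
    [MeasurableSpace β] {μα : Measure α} [IsProbabilityMeasure μα] {μ : Measure β} [SFinite μ]
    {T : α → β → β} (hT : Measurable (uncurry T)) (h : ∀ a, MeasurePreserving (T a) μ μ)
    {f Φ : β → ℂ} (hf : ∀ a y, f (T a y) = f y) (hfΦ : Integrable (fun y => f y * Φ y) μ) :
    ∫ y, f y * Φ y ∂μ = ∫ y, f y * ∫ a, Φ (T a y) ∂μα ∂μ := by
  rw [integral_eq_integral_integral_comp (μα := μα) hT h hfΦ]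
  simp_rw [hf, integral_const_mul]

theorem integrable_prod_of_lintegral_enorm_le {α β E : Type*} [MeasurableSpace α]
    [MeasurableSpace β] [NormedAddCommGroup E] {μα : Measure α} [IsFiniteMeasure μα]
    {μβ : Measure β} [SFinite μβ] {F : α × β → E} (hF : AEStronglyMeasurable F (μα.prod μβ))
    {C : ℝ≥0∞} (hC : C ≠ ∞) (hbound : ∀ a, ∫⁻ b, ‖F (a, b)‖ₑ ∂μβ ≤ C) :
    Integrable F (μα.prod μβ) := by
  refine ⟨hF, ?_⟩
  calc ∫⁻ p, ‖F p‖ₑ ∂μα.prod μβ = ∫⁻ a, ∫⁻ b, ‖F (a, b)‖ₑ ∂μβ ∂μα := lintegral_prod _ hF.enorm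
    _ ≤ ∫⁻ _, C ∂μα := lintegral_mono hbound
    _ < ∞ := by simpa using ENNReal.mul_lt_top hC.lt_top (measure_lt_top μα _)

theorem Real.sqrt_eq_sqrt_of_ofReal_eq {a b : ℝ} (h : ENNReal.ofReal a = ENNReal.ofReal b) :
    √a = √b := by
  rw [Real.sqrt, Real.sqrt, ENNReal.coe_injective h]

theorem ENNReal.ofReal_sqrt_sq (a : ℝ) : ENNReal.ofReal √a ^ 2 = ENNReal.ofReal a := by
  rcases le_total 0 a with ha | ha
  · rw [← ENNReal.ofReal_pow (Real.sqrt_nonneg a), Real.sq_sqrt ha]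
  · simp [Real.sqrt_eq_zero'.2 ha, ENNReal.ofReal_of_nonpos ha]

theorem MeasurableEquiv.map_withDensity_of_map_eq {α β : Type*} [MeasurableSpace α]
    [MeasurableSpace β] {μ : Measure α} {ν : Measure β} (e : α ≃ᵐ β) (he : μ.map e = ν)
    {w : α → ℝ≥0∞} (hw : Measurable w) :
    (μ.withDensity w).map e = ν.withDensity (w ∘ e.symm) := by
  ext A hA
  rw [e.map_apply, withDensity_apply _ (e.measurable hA), withDensity_apply _ hA, ← he,
    setLIntegral_map hA (hw.comp e.symm.measurable) e.measurable]
  simp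

theorem map_mul_right_eq_self_of_mem_of_isCompact {G : Type*} [Group G] [TopologicalSpace G]
    [IsTopologicalGroup G] [LocallyCompactSpace G] [SecondCountableTopology G]
    [MeasurableSpace G] [BorelSpace G] (μ : Measure G) [μ.IsHaarMeasure] {K : Subgroup G}
    (hK : IsCompact (K : Set G)) {k : G} (hk : k ∈ K) : μ.map (· * k) = μ := by
  obtain ⟨V, hV, hV1⟩ := exists_compact_mem_nhds (1 : G)
  have hA : (· * k) ⁻¹' (V * K) = V * K := by
    ext x
    simp only [mem_preimage, Set.mem_mul, SetLike.mem_coe]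
    constructor
    · rintro ⟨v, hv, k', hk', hx⟩
      exact ⟨v, hv, k' * k⁻¹, K.mul_mem hk' (K.inv_mem hk), by rw [← mul_assoc, hx]; group⟩
    · rintro ⟨v, hv, k', hk', rfl⟩
      exact ⟨v, hv, k' * k, K.mul_mem hk' hk, (mul_assoc _ _ _).symm⟩
  have hpos : μ (V * K) ≠ 0 :=
    (μ.measure_pos_of_mem_nhds (mem_of_superset hV1 (subset_mul_left V K.one_mem))).ne'
  have hfin : μ (V * K) ≠ ∞ := (hV.mul hK).measure_lt_top.ne
  have hC := Measure.isMulLeftInvariant_eq_smul (μ.map (· * k)) μ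
  have hCA := congrArg (· (V * K)) hC
  simp only [(measurableEmbedding_mulRight k).map_apply, hA, Measure.smul_apply] at hCA
  have h1 : (μ.map (· * k)).haarScalarFactor μ = 1 := by
    rw [ENNReal.smul_def, smul_eq_mul] at hCA
    exact_mod_cast (ENNReal.mul_eq_right hpos hfin).1 hCA.symm
  rw [hC, h1, one_smul]

theorem exists_isProbabilityMeasure_isMulRightInvariant (H : Type*) [Group H]
    [TopologicalSpace H] [IsTopologicalGroup H] [CompactSpace H] [MeasurableSpace H]
    [BorelSpace H] : ∃ μ : Measure H, IsProbabilityMeasure μ ∧ μ.IsMulRightInvariant := by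
  let μ := Measure.haarMeasure (⊤ : TopologicalSpace.PositiveCompacts H)
  have : IsProbabilityMeasure μ :=
    ⟨by rw [← TopologicalSpace.PositiveCompacts.coe_top]; exact Measure.haarMeasure_self⟩
  refine ⟨μ, this, ⟨fun h => ?_⟩⟩
  have := Measure.isProbabilityMeasure_map (μ := μ) (measurable_mul_const h).aemeasurable
  exact Measure.isHaarMeasure_eq_of_isProbabilityMeasure _ _

theorem ErgodicSMul.ae_eq_const_of_forall_smul_eq {H X : Type*} [Group H] [MulAction H X]
    [MeasurableSpace X] {ν : Measure X} [ErgodicSMul H X ν] {φ : X → ℂ} (hφ : Measurable φ)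
    (hinv : ∀ (h : H) x, φ (h • x) = φ x) : ∃ t, φ =ᵐ[ν] fun _ => t :=
  exists_eventuallyEq_const_of_forall_separating MeasurableSet fun U hU =>
    eventuallyConst_set.1 <| MeasureTheory.aeconst_of_forall_preimage_smul_ae_eq H
      (hφ hU).nullMeasurableSet fun h => .of_eq <| by
        ext x
        exact iff_of_eq (congrArg U (hinv h x))

theorem ergodicSMul_of_forall_map_smul_eq {G X : Type*} [Group G] [MulAction G X]
    [MeasurableSpace X] [MeasurableConstSMul G X] {ν : Measure X} [IsProbabilityMeasure ν]
    {K : Subgroup G} (hKinv : ∀ k ∈ K, Measure.map (fun x : X => k • x) ν = ν)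
    (herg : ∀ A : Set X, MeasurableSet A →
      (∀ k ∈ K, ν (symmDiff ((fun x => k • x) '' A) A) = 0) → ν A = 0 ∨ ν A = 1) :
    ErgodicSMul K X ν where
  measure_preimage_smul k s hs := by
    rw [← Measure.map_apply (measurable_const_smul k) hs]
    exact congrArg (· s) (hKinv k k.2)
  aeconst_of_forall_preimage_smul_ae_eq {s} hs hinv := by
    refine eventuallyConst_set.2 ((herg s hs fun k hk => ?_).symm.imp (fun h => ?_) fun h => ?_)
    · rw [image_smul, ← preimage_smul_inv]
      exact measure_symmDiff_eq_zero_iff.2 (hinv ⟨k, hk⟩⁻¹)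
    · exact (ae_mem_iff_measure_eq hs.nullMeasurableSet).2 (by simp [h])
    · exact measure_eq_zero_iff_ae_notMem.1 h

section OrbitAverage

variable {H X : Type*} [Group H] [MulAction H X] [MeasurableSpace H]

noncomputable def orbitAverage (μH : Measure H) (φ : X → ℂ) (x : X) : ℂ :=
  ∫ h, φ (h • x) ∂μH

theorem orbitAverage_smul [MeasurableMul H] (μH : Measure H) [μH.IsMulRightInvariant]
    (φ : X → ℂ) (h : H) (x : X) : orbitAverage μH φ (h • x) = orbitAverage μH φ x := by
  simp_rw [orbitAverage, smul_smul]
  exact integral_mul_right_eq_self (fun h' => φ (h' • x)) h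

variable [MeasurableSpace X] [MeasurableSMul₂ H X] {ν : Measure X}

theorem measurable_orbitAverage (μH : Measure H) [SFinite μH] {φ : X → ℂ} (hφ : Measurable φ) :
    Measurable (orbitAverage μH φ) :=
  (hφ.comp measurable_smul).stronglyMeasurable.integral_prod_left' |>.measurable

theorem integral_orbitAverage [SFinite ν] [SMulInvariantMeasure H X ν] (μH : Measure H)
    [IsProbabilityMeasure μH] {φ : X → ℂ} (hφ : Integrable φ ν) :
    ∫ x, orbitAverage μH φ x ∂ν = ∫ x, φ x ∂ν :=
  (integral_eq_integral_integral_comp measurable_smul (fun h => measurePreserving_smul h ν)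
    hφ).symm

theorem orbitAverage_ae_eq_integral [IsProbabilityMeasure ν] [ErgodicSMul H X ν]
    [MeasurableMul H] (μH : Measure H) [IsProbabilityMeasure μH] [μH.IsMulRightInvariant]
    {φ : X → ℂ}
    (hφ : Measurable φ) (hφi : Integrable φ ν) :
    orbitAverage μH φ =ᵐ[ν] fun _ => ∫ x, φ x ∂ν := by
  obtain ⟨t, ht⟩ := ErgodicSMul.ae_eq_const_of_forall_smul_eq (ν := ν)
    (measurable_orbitAverage μH hφ) (orbitAverage_smul μH φ)
  have : ∫ x, orbitAverage μH φ x ∂ν = t := by simp [integral_congr_ae ht]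
  rwa [← this, integral_orbitAverage μH hφi] at ht

end OrbitAverage

section RadonNikodym

variable {G X : Type*} [Group G] [MulAction G X] [MeasurableSpace G] [MeasurableSpace X]

structure IsRadonNikodymCocycle (ν : Measure X) (c : G → X → ℝ) : Prop where
  measurable : Measurable (uncurry c)
  map_smul : ∀ g : G, ν.map (g • ·) = ν.withDensity fun x => ENNReal.ofReal (c g x)

namespace IsRadonNikodymCocycle

variable {ν : Measure X} {c : G → X → ℝ}

theorem measurable_apply (hc : IsRadonNikodymCocycle ν c) (g : G) : Measurable (c g) :=
  hc.measurable.comp measurable_prodMk_left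

theorem sqrt_ae_eq_of_map_smul_eq [SigmaFinite ν] (hc : IsRadonNikodymCocycle ν c) {g : G}
    {d : X → ℝ} (hd : Measurable d)
    (h : ν.map (g • ·) = ν.withDensity fun x => ENNReal.ofReal (d x)) :
    ∀ᵐ x ∂ν, √(c g x) = √(d x) := by
  have := (withDensity_eq_iff_of_sigmaFinite (hc.measurable_apply g).ennreal_ofReal.aemeasurable
    hd.ennreal_ofReal.aemeasurable).1 (by rw [← hc.map_smul, h])
  exact this.mono fun x hx => Real.sqrt_eq_sqrt_of_ofReal_eq hx

variable [MeasurableConstSMul G X]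

theorem quasiMeasurePreserving_smul (hc : IsRadonNikodymCocycle ν c) (g : G) :
    Measure.QuasiMeasurePreserving (g • ·) ν ν :=
  ⟨measurable_const_smul g, by rw [hc.map_smul]; exact withDensity_absolutelyContinuous _ _⟩

theorem lintegral_ofReal_mul_comp_inv_smul (hc : IsRadonNikodymCocycle ν c) (g : G)
    {w : X → ℝ≥0∞} (hw : Measurable w) :
    ∫⁻ x, ENNReal.ofReal (c g x) * w (g⁻¹ • x) ∂ν = ∫⁻ x, w x ∂ν := by
  have hwg : Measurable fun x => w (g⁻¹ • x) := hw.comp (measurable_const_smul _)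
  calc ∫⁻ x, ENNReal.ofReal (c g x) * w (g⁻¹ • x) ∂ν
      = ∫⁻ x, w (g⁻¹ • x) ∂ν.withDensity fun x => ENNReal.ofReal (c g x) :=
        (lintegral_withDensity_eq_lintegral_mul _ (hc.measurable_apply g).ennreal_ofReal hwg).symm
    _ = ∫⁻ x, w x ∂ν := by
        rw [← hc.map_smul, lintegral_map hwg (measurable_const_smul g)]
        simp

theorem sqrt_mul_right_ae_eq [SigmaFinite ν] (hc : IsRadonNikodymCocycle ν c) (g : G) {k : G}
    (hk : ν.map (k • ·) = ν) : ∀ᵐ x ∂ν, √(c (g * k) x) = √(c g x) := by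
  refine hc.sqrt_ae_eq_of_map_smul_eq (hc.measurable_apply g) ?_
  have : (fun x : X => (g * k) • x) = (g • ·) ∘ (k • ·) := funext fun x => mul_smul g k x
  rw [this, ← Measure.map_map (measurable_const_smul g) (measurable_const_smul k), hk,
    hc.map_smul]

theorem sqrt_mul_left_ae_eq [SigmaFinite ν] (hc : IsRadonNikodymCocycle ν c) (g : G) {k : G}
    (hk : ν.map (k • ·) = ν) : ∀ᵐ x ∂ν, √(c (k * g) (k • x)) = √(c g x) := by
  have hmap : ν.map ((k * g) • ·) = ν.withDensity fun x => ENNReal.ofReal (c g (k⁻¹ • x)) := by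
    have : (fun x : X => (k * g) • x) = (k • ·) ∘ (g • ·) := funext fun x => mul_smul k g x
    rw [this, ← Measure.map_map (measurable_const_smul k) (measurable_const_smul g), hc.map_smul]
    exact (MeasurableEquiv.smul k).map_withDensity_of_map_eq hk
      (hc.measurable_apply g).ennreal_ofReal
  have h := hc.sqrt_ae_eq_of_map_smul_eq
    ((hc.measurable_apply g).comp (measurable_const_smul k⁻¹)) hmap
  filter_upwards [(hc.quasiMeasurePreserving_smul k).ae h] with x hx
  simpa only [comp_apply, inv_smul_smul] using hx

end IsRadonNikodymCocycle

end RadonNikodym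

section QuasiRegular

variable {G X : Type*} [Group G] [MulAction G X] [MeasurableSpace X]

/-- `quasiRegular c g ψ` is `π_ν(g) ψ`, and `quasiRegularCoeff ν c ψ φ g = ⟨π_ν(g) ψ, conj φ⟩`;
the pairing is kept bilinear so that either argument can be replaced by a constant. -/
noncomputable def quasiRegular (c : G → X → ℝ) (g : G) (ψ : X → ℂ) (x : X) : ℂ :=
  √(c g x) * ψ (g⁻¹ • x)

noncomputable def quasiRegularCoeff (ν : Measure X) (c : G → X → ℝ) (ψ φ : X → ℂ) (g : G) : ℂ :=
  ∫ x, quasiRegular c g ψ x * φ x ∂ν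

variable {ν : Measure X} {c : G → X → ℝ}

theorem quasiRegularCoeff_congr_right {ψ φ φ' : X → ℂ} (h : φ =ᵐ[ν] φ') (g : G) :
    quasiRegularCoeff ν c ψ φ g = quasiRegularCoeff ν c ψ φ' g :=
  integral_congr_ae (h.mono fun x hx => by simp only [hx])

theorem quasiRegularCoeff_const (a b : ℂ) (g : G) :
    quasiRegularCoeff ν c (fun _ => a) (fun _ => b) g = (∫ x, √(c g x) ∂ν : ℝ) * a * b := by
  simp only [quasiRegularCoeff, quasiRegular, integral_mul_const, integral_complex_ofReal]

variable [MeasurableSpace G]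

namespace IsRadonNikodymCocycle

section ConstSMul

variable [MeasurableConstSMul G X]

theorem measurable_quasiRegular (hc : IsRadonNikodymCocycle ν c) (g : G) {ψ : X → ℂ}
    (hψ : Measurable ψ) : Measurable (quasiRegular c g ψ) :=
  (Complex.measurable_ofReal.comp (hc.measurable_apply g).sqrt).mul
    (hψ.comp (measurable_const_smul _))

theorem eLpNorm_quasiRegular (hc : IsRadonNikodymCocycle ν c) (g : G) {ψ : X → ℂ}
    (hψ : Measurable ψ) : eLpNorm (quasiRegular c g ψ) 2 ν = eLpNorm ψ 2 ν := by
  simp only [eLpNorm_eq_lintegral_rpow_enorm_toReal two_ne_zero ofNat_ne_top, toReal_ofNat,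
    rpow_two]
  congr 1
  rw [← hc.lintegral_ofReal_mul_comp_inv_smul g (hψ.enorm.pow_const 2)]
  refine lintegral_congr fun x => ?_
  rw [quasiRegular, enorm_mul, mul_pow, ← ofReal_norm, Complex.norm_real,
    Real.norm_of_nonneg (Real.sqrt_nonneg _), ENNReal.ofReal_sqrt_sq]

theorem lintegral_enorm_quasiRegular_mul_le (hc : IsRadonNikodymCocycle ν c) (g : G)
    {ψ φ : X → ℂ} (hψ : Measurable ψ) (hφ : AEStronglyMeasurable φ ν) :
    ∫⁻ x, ‖quasiRegular c g ψ x * φ x‖ₑ ∂ν ≤ eLpNorm ψ 2 ν * eLpNorm φ 2 ν := by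
  rw [← eLpNorm_one_eq_lintegral_enorm, ← hc.eLpNorm_quasiRegular g hψ]
  simpa using eLpNorm_le_eLpNorm_mul_eLpNorm'_of_norm (p := 2) (q := 2) (r := 1)
    (hc.measurable_quasiRegular g hψ).aestronglyMeasurable hφ (· * ·) 1
    (ae_of_all _ fun x => by simp)

theorem enorm_quasiRegularCoeff_le (hc : IsRadonNikodymCocycle ν c) (g : G)
    {ψ φ : X → ℂ} (hψ : Measurable ψ) (hφ : AEStronglyMeasurable φ ν) :
    ‖quasiRegularCoeff ν c ψ φ g‖ₑ ≤ eLpNorm ψ 2 ν * eLpNorm φ 2 ν :=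
  (enorm_integral_le_lintegral_enorm _).trans (hc.lintegral_enorm_quasiRegular_mul_le g hψ hφ)

theorem quasiRegularCoeff_congr_left (hc : IsRadonNikodymCocycle ν c) {ψ ψ' φ : X → ℂ}
    (h : ψ =ᵐ[ν] ψ') (g : G) : quasiRegularCoeff ν c ψ φ g = quasiRegularCoeff ν c ψ' φ g := by
  refine integral_congr_ae ?_
  filter_upwards [(hc.quasiMeasurePreserving_smul g⁻¹).ae h] with x hx
  rw [quasiRegular, quasiRegular, hx]

theorem quasiRegularCoeff_mul_left [SigmaFinite ν] (hc : IsRadonNikodymCocycle ν c) {k : G}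
    (hk : ν.map (k • ·) = ν) (ψ φ : X → ℂ) (g : G) :
    quasiRegularCoeff ν c ψ φ (k * g) = quasiRegularCoeff ν c ψ (fun x => φ (k • x)) g := by
  rw [quasiRegularCoeff, ← (MeasurePreserving.integral_comp' (f := MeasurableEquiv.smul k)
    ⟨measurable_const_smul k, hk⟩)]
  refine integral_congr_ae ?_
  filter_upwards [hc.sqrt_mul_left_ae_eq g hk] with x hx
  simp [quasiRegular, hx, mul_smul]

theorem quasiRegularCoeff_mul_inv_right [SigmaFinite ν] (hc : IsRadonNikodymCocycle ν c) {k : G}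
    (hk : ν.map (k⁻¹ • ·) = ν) (ψ φ : X → ℂ) (g : G) :
    quasiRegularCoeff ν c ψ φ (g * k⁻¹) = quasiRegularCoeff ν c (fun x => ψ (k • x)) φ g := by
  refine integral_congr_ae ?_
  filter_upwards [hc.sqrt_mul_right_ae_eq g hk] with x hx
  simp [quasiRegular, hx, mul_smul]

end ConstSMul

theorem stronglyMeasurable_quasiRegularCoeff [MeasurableInv G] [MeasurableSMul₂ G X]
    [SFinite ν] (hc : IsRadonNikodymCocycle ν c) {ψ φ : X → ℂ} (hψ : Measurable ψ)
    (hφ : Measurable φ) :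
    StronglyMeasurable (quasiRegularCoeff ν c ψ φ) :=
  StronglyMeasurable.integral_prod_right'
    (f := fun p : G × X => quasiRegular c p.1 ψ p.2 * φ p.2)
    ((Complex.measurable_ofReal.comp hc.measurable.sqrt).mul
      (hψ.comp (measurable_fst.inv.smul measurable_snd)) |>.mul
      (hφ.comp measurable_snd)).stronglyMeasurable

end IsRadonNikodymCocycle

end QuasiRegular

section Averaging

variable {G H X : Type*} [Group G] [MulAction G X] [MeasurableSpace G] [Group H] [MulAction H X]
  [MeasurableSpace H] [MeasurableSpace X] [MeasurableConstSMul G X] [MeasurableSMul₂ H X]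
  {ν : Measure X} [SFinite ν] [SMulInvariantMeasure H X ν] {c : G → X → ℝ}

namespace IsRadonNikodymCocycle

theorem integral_quasiRegularCoeff_comp_smul_right (hc : IsRadonNikodymCocycle ν c)
    (μH : Measure H) [IsFiniteMeasure μH] {ψ φ : X → ℂ} (hψ : Measurable ψ) (hψ2 : MemLp ψ 2 ν)
    (hφ : Measurable φ) (hφ2 : MemLp φ 2 ν) (g : G) :
    ∫ h, quasiRegularCoeff ν c ψ (fun x => φ (h • x)) g ∂μH
      = quasiRegularCoeff ν c ψ (orbitAverage μH φ) g := by
  have hF : Integrable (uncurry fun h x => quasiRegular c g ψ x * φ (h • x)) (μH.prod ν) := by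
    refine integrable_prod_of_lintegral_enorm_le
      (((hc.measurable_quasiRegular g hψ).comp measurable_snd).mul
        (hφ.comp measurable_smul)).aestronglyMeasurable
      (mul_ne_top hψ2.eLpNorm_ne_top hφ2.eLpNorm_ne_top) fun h => ?_
    calc _ ≤ eLpNorm ψ 2 ν * eLpNorm (fun x => φ (h • x)) 2 ν :=
          hc.lintegral_enorm_quasiRegular_mul_le g hψ
            (hφ.comp (measurable_const_smul h)).aestronglyMeasurable
      _ = _ := congrArg (_ * ·)
          (eLpNorm_comp_measurePreserving hφ2.1 (measurePreserving_smul h ν))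
  simp_rw [quasiRegularCoeff, integral_integral_swap hF, orbitAverage, integral_const_mul]

theorem integral_quasiRegularCoeff_comp_smul_left (hc : IsRadonNikodymCocycle ν c)
    (μH : Measure H) [IsFiniteMeasure μH] {ψ φ : X → ℂ} (hψ : Measurable ψ) (hψ2 : MemLp ψ 2 ν)
    (hφ : Measurable φ) (hφ2 : MemLp φ 2 ν) (g : G) :
    ∫ h, quasiRegularCoeff ν c (fun x => ψ (h • x)) φ g ∂μH
      = quasiRegularCoeff ν c (orbitAverage μH ψ) φ g := by
  have hF : Integrable (uncurry fun h x => quasiRegular c g (fun y => ψ (h • y)) x * φ x)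
      (μH.prod ν) := by
    refine integrable_prod_of_lintegral_enorm_le
      ((Complex.measurable_ofReal.comp ((hc.measurable_apply g).sqrt.comp measurable_snd)).mul
        (hψ.comp (measurable_fst.smul ((measurable_const_smul g⁻¹).comp measurable_snd))) |>.mul
        (hφ.comp measurable_snd)).aestronglyMeasurable
      (mul_ne_top hψ2.eLpNorm_ne_top hφ2.eLpNorm_ne_top) fun h => ?_
    calc _ ≤ eLpNorm (fun x => ψ (h • x)) 2 ν * eLpNorm φ 2 ν :=
          hc.lintegral_enorm_quasiRegular_mul_le g (hψ.comp (measurable_const_smul h)) hφ2.1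
      _ = _ := congrArg (· * _)
          (eLpNorm_comp_measurePreserving hψ2.1 (measurePreserving_smul h ν))
  simp_rw [quasiRegularCoeff, integral_integral_swap hF, quasiRegular, orbitAverage,
    integral_mul_const, integral_const_mul]

end IsRadonNikodymCocycle

end Averaging

section SubgroupAveraging

variable {G X : Type*} [Group G] [MulAction G X] [MeasurableSpace G] [MeasurableSpace X]
  [MeasurableConstSMul G X] {ν : Measure X} [IsProbabilityMeasure ν] {c : G → X → ℝ}
  {K : Subgroup G} [MeasurableMul K] [MeasurableSMul₂ K X] [ErgodicSMul K X ν]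
  (μK : Measure K) [IsProbabilityMeasure μK] [μK.IsMulRightInvariant]

namespace IsRadonNikodymCocycle

theorem integral_quasiRegularCoeff_mul_left (hc : IsRadonNikodymCocycle ν c) {ψ φ : X → ℂ}
    (hψ : Measurable ψ) (hψ2 : MemLp ψ 2 ν) (hφ : Measurable φ) (hφ2 : MemLp φ 2 ν) (g : G) :
    ∫ k, quasiRegularCoeff ν c ψ φ ((k : G) * g) ∂μK
      = quasiRegularCoeff ν c ψ (fun _ => ∫ x, φ x ∂ν) g :=
  calc _ = ∫ k : K, quasiRegularCoeff ν c ψ (fun x => φ (k • x)) g ∂μK :=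
        integral_congr_ae <| ae_of_all _ fun k =>
          hc.quasiRegularCoeff_mul_left (measurePreserving_smul k ν).map_eq ψ φ g
    _ = quasiRegularCoeff ν c ψ (orbitAverage μK φ) g :=
        hc.integral_quasiRegularCoeff_comp_smul_right μK hψ hψ2 hφ hφ2 g
    _ = _ := quasiRegularCoeff_congr_right
        (orbitAverage_ae_eq_integral μK hφ (hφ2.integrable one_le_two)) g

theorem integral_quasiRegularCoeff_mul_inv_right (hc : IsRadonNikodymCocycle ν c) {ψ φ : X → ℂ}
    (hψ : Measurable ψ) (hψ2 : MemLp ψ 2 ν) (hφ : Measurable φ) (hφ2 : MemLp φ 2 ν) (g : G) :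
    ∫ k, quasiRegularCoeff ν c ψ φ (g * (k : G)⁻¹) ∂μK
      = quasiRegularCoeff ν c (fun _ => ∫ x, ψ x ∂ν) φ g :=
  calc _ = ∫ k : K, quasiRegularCoeff ν c (fun x => ψ (k • x)) φ g ∂μK :=
        integral_congr_ae <| ae_of_all _ fun k =>
          hc.quasiRegularCoeff_mul_inv_right (measurePreserving_smul k⁻¹ ν).map_eq ψ φ g
    _ = quasiRegularCoeff ν c (orbitAverage μK ψ) φ g :=
        hc.integral_quasiRegularCoeff_comp_smul_left μK hψ hψ2 hφ hφ2 g
    _ = _ := hc.quasiRegularCoeff_congr_left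
        (orbitAverage_ae_eq_integral μK hψ (hψ2.integrable one_le_two)) g

end IsRadonNikodymCocycle

end SubgroupAveraging

section GroupAveraging

variable {G X : Type*} [Group G] [MulAction G X] [MeasurableSpace G] [MeasurableSpace X]
  [MeasurableInv G] [MeasurableSMul₂ G X] {ν : Measure X} [IsProbabilityMeasure ν]
  {c : G → X → ℝ} {μG : Measure G} {f : G → ℂ}

namespace IsRadonNikodymCocycle

theorem integrable_mul_quasiRegularCoeff (hc : IsRadonNikodymCocycle ν c) (hf : Integrable f μG)
    {ψ φ : X → ℂ} (hψ : Measurable ψ) (hψ2 : MemLp ψ 2 ν) (hφ : Measurable φ)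
    (hφ2 : MemLp φ 2 ν) : Integrable (fun g => f g * quasiRegularCoeff ν c ψ φ g) μG :=
  hf.mul_bdd (hc.stronglyMeasurable_quasiRegularCoeff hψ hφ).aestronglyMeasurable <|
    ae_of_all _ fun g => by
      rw [← toReal_enorm]
      exact ENNReal.toReal_mono (mul_ne_top hψ2.eLpNorm_ne_top hφ2.eLpNorm_ne_top)
        (hc.enorm_quasiRegularCoeff_le g hψ hφ2.1)

variable [MeasurableMul₂ G] [SFinite μG] {K : Subgroup G} [MeasurableMul K]
  [MeasurableSMul₂ K X] [ErgodicSMul K X ν]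

theorem integral_mul_quasiRegularCoeff_eq_const_right [μG.IsMulLeftInvariant]
    (μK : Measure K) [IsProbabilityMeasure μK] [μK.IsMulRightInvariant]
    (hc : IsRadonNikodymCocycle ν c) (hf : Integrable f μG) (hfK : ∀ k ∈ K, ∀ g, f (k * g) = f g)
    {ψ φ : X → ℂ} (hψ : Measurable ψ) (hψ2 : MemLp ψ 2 ν) (hφ : Measurable φ)
    (hφ2 : MemLp φ 2 ν) :
    ∫ g, f g * quasiRegularCoeff ν c ψ φ g ∂μG
      = ∫ g, f g * quasiRegularCoeff ν c ψ (fun _ => ∫ x, φ x ∂ν) g ∂μG := by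
  rw [integral_mul_eq_integral_mul_integral_comp (μα := μK) (T := fun k g => (k : G) * g)
    (by fun_prop) (fun k => measurePreserving_mul_left μG (k : G)) (fun k : K => hfK k k.2)
    (hc.integrable_mul_quasiRegularCoeff hf hψ hψ2 hφ hφ2)]
  simp_rw [hc.integral_quasiRegularCoeff_mul_left μK hψ hψ2 hφ hφ2]

theorem integral_mul_quasiRegularCoeff_eq_const_left (μK : Measure K) [IsProbabilityMeasure μK]
    [μK.IsMulRightInvariant] (hμG : ∀ k ∈ K, μG.map (· * k) = μG)
    (hc : IsRadonNikodymCocycle ν c) (hf : Integrable f μG) (hfK : ∀ k ∈ K, ∀ g, f (g * k) = f g)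
    {ψ φ : X → ℂ} (hψ : Measurable ψ) (hψ2 : MemLp ψ 2 ν) (hφ : Measurable φ)
    (hφ2 : MemLp φ 2 ν) :
    ∫ g, f g * quasiRegularCoeff ν c ψ φ g ∂μG
      = ∫ g, f g * quasiRegularCoeff ν c (fun _ => ∫ x, ψ x ∂ν) φ g ∂μG := by
  rw [integral_mul_eq_integral_mul_integral_comp (μα := μK) (T := fun k g => g * (k : G)⁻¹)
    (by fun_prop) (fun k : K => ⟨measurable_mul_const _, hμG _ (K.inv_mem k.2)⟩)
    (fun k : K => hfK _ (K.inv_mem k.2)) (hc.integrable_mul_quasiRegularCoeff hf hψ hψ2 hφ hφ2)]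
  simp_rw [hc.integral_quasiRegularCoeff_mul_inv_right μK hψ hψ2 hφ hφ2]

end IsRadonNikodymCocycle

end GroupAveraging

theorem radial_matrix_coefficient_identity_general
    {G : Type*} [Group G] [TopologicalSpace G] [IsTopologicalGroup G]
    [LocallyCompactSpace G] [SecondCountableTopology G]
    [MeasurableSpace G] [BorelSpace G]
    (μG : Measure G) [μG.IsHaarMeasure]
    (K : Subgroup G) (hK : IsCompact (K : Set G))
    {X : Type*} [MeasurableSpace X] [MulAction G X]
    (ν : Measure X) [IsProbabilityMeasure ν]
    (hact : Measurable (fun p : G × X => p.1 • p.2))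
    (c : G → X → ℝ)
    (hc_meas : Measurable (fun p : G × X => c p.1 p.2))
    (hc : ∀ g : G, Measure.map (fun x : X => g • x) ν
        = ν.withDensity (fun x => ENNReal.ofReal (c g x)))
    (hKinv : ∀ k ∈ K, Measure.map (fun x : X => k • x) ν = ν)
    (herg : ∀ A : Set X, MeasurableSet A →
      (∀ k ∈ K, ν (symmDiff ((fun x => k • x) '' A) A) = 0) → ν A = 0 ∨ ν A = 1)
    (Ξ : G → ℝ) (hΞ : ∀ g : G, Ξ g = ∫ x, Real.sqrt (c g x) ∂ν)
    (f : G → ℂ) (hf_cont : Continuous f) (hf_supp : HasCompactSupport f)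
    (hf_biK : ∀ k ∈ K, ∀ k' ∈ K, ∀ g : G, f (k * g * k') = f g)
    (ξ η : Lp ℂ 2 ν) :
    ∫ g, f g * ∫ x, (Real.sqrt (c g x) : ℂ) * (ξ : X → ℂ) (g⁻¹ • x)
        * (starRingEnd ℂ) ((η : X → ℂ) x) ∂ν ∂μG
      = (∫ x, (ξ : X → ℂ) x ∂ν) * (∫ x, (starRingEnd ℂ) ((η : X → ℂ) x) ∂ν)
        * ∫ g, f g * (Ξ g : ℂ) ∂μG := by
  have : MeasurableSMul₂ G X := ⟨hact⟩
  have : MeasurableSMul₂ K X := ⟨hact.comp (measurable_subtype_coe.prodMap measurable_id)⟩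
  have : ErgodicSMul K X ν := ergodicSMul_of_forall_map_smul_eq hKinv herg
  have : CompactSpace K := isCompact_iff_compactSpace.mp hK
  obtain ⟨μK, _, _⟩ := exists_isProbabilityMeasure_isMulRightInvariant K
  have hcoc : IsRadonNikodymCocycle ν c := ⟨hc_meas, hc⟩
  have hf : Integrable f μG := hf_cont.integrable_of_hasCompactSupport hf_supp
  have hξ : Measurable (ξ : X → ℂ) := (Lp.stronglyMeasurable ξ).measurable
  have hη : Measurable fun x => starRingEnd ℂ ((η : X → ℂ) x) :=
    Complex.continuous_conj.measurable.comp (Lp.stronglyMeasurable η).measurable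
  have hη2 : MemLp (fun x => starRingEnd ℂ ((η : X → ℂ) x)) 2 ν := (Lp.memLp η).star
  calc _ = ∫ g, f g * quasiRegularCoeff ν c ξ (fun x => starRingEnd ℂ ((η : X → ℂ) x)) g ∂μG :=
        rfl
    _ = ∫ g, f g * quasiRegularCoeff ν c ξ
          (fun _ => ∫ x, starRingEnd ℂ ((η : X → ℂ) x) ∂ν) g ∂μG :=
        hcoc.integral_mul_quasiRegularCoeff_eq_const_right μK hf
          (fun k hk g => by simpa using hf_biK k hk 1 K.one_mem g) hξ (Lp.memLp ξ) hη hη2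
    _ = ∫ g, f g * quasiRegularCoeff ν c (fun _ => ∫ x, (ξ : X → ℂ) x ∂ν)
          (fun _ => ∫ x, starRingEnd ℂ ((η : X → ℂ) x) ∂ν) g ∂μG :=
        hcoc.integral_mul_quasiRegularCoeff_eq_const_left μK
          (fun k hk => map_mul_right_eq_self_of_mem_of_isCompact μG hK hk) hf
          (fun k hk g => by simpa using hf_biK 1 K.one_mem k hk g) hξ (Lp.memLp ξ)
          measurable_const (memLp_const _)
    _ = _ := by
        simp_rw [quasiRegularCoeff_const, ← hΞ]
        rw [← integral_const_mul]
        exact integral_congr_ae (ae_of_all _ fun g => by ring)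

/-- Abstract form of Proposition 3.1, first part: for every continuous compactly
supported bi-`K`-invariant `f : G → ℂ` and all `ξ, η ∈ L²(X, ν)`,
`∫_G f(g) ⟨π_ν(g)ξ, η⟩ dμ_G(g) = ⟨ξ, 1⟩ ⟨1, η⟩ ∫_G f(g) Ξ(g) dμ_G(g)`, where
`⟨π_ν(g)ξ, η⟩ = ∫_X c(g,x)^{1/2} ξ(g⁻¹·x) conj(η(x)) dν(x)`,
`⟨ξ,1⟩ = ∫ ξ dν`, `⟨1,η⟩ = ∫ conj(η) dν`, and `Ξ(g) = ∫_X c(g,x)^{1/2} dν(x)`. -/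
theorem radial_matrix_coefficient_identity
    {G : Type*} [Group G] [TopologicalSpace G] [IsTopologicalGroup G]
    [LocallyCompactSpace G] [SecondCountableTopology G]
    [MeasurableSpace G] [BorelSpace G]
    (μG : Measure G) [μG.IsHaarMeasure]
    (K : Subgroup G) (hK : IsCompact (K : Set G))
    {X : Type*} [MeasurableSpace X] [MulAction G X]
    (ν : Measure X) [IsProbabilityMeasure ν]
    (hact : Measurable (fun p : G × X => p.1 • p.2))
    (c : G → X → ℝ)
    (hc_meas : Measurable (fun p : G × X => c p.1 p.2))
    (hc_pos : ∀ g : G, ∀ᵐ x ∂ν, 0 < c g x)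
    (hc : ∀ g : G, Measure.map (fun x : X => g • x) ν
        = ν.withDensity (fun x => ENNReal.ofReal (c g x)))
    (hKinv : ∀ k ∈ K, Measure.map (fun x : X => k • x) ν = ν)
    (herg : ∀ A : Set X, MeasurableSet A →
      (∀ k ∈ K, ν (symmDiff ((fun x => k • x) '' A) A) = 0) → ν A = 0 ∨ ν A = 1)
    (Ξ : G → ℝ) (hΞ : ∀ g : G, Ξ g = ∫ x, Real.sqrt (c g x) ∂ν)
    (f : G → ℂ) (hf_cont : Continuous f) (hf_supp : HasCompactSupport f)
    (hf_biK : ∀ k ∈ K, ∀ k' ∈ K, ∀ g : G, f (k * g * k') = f g)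
    (ξ η : Lp ℂ 2 ν) :
    ∫ g, f g * ∫ x, (Real.sqrt (c g x) : ℂ) * (ξ : X → ℂ) (g⁻¹ • x)
        * (starRingEnd ℂ) ((η : X → ℂ) x) ∂ν ∂μG
      = (∫ x, (ξ : X → ℂ) x ∂ν) * (∫ x, (starRingEnd ℂ) ((η : X → ℂ) x) ∂ν)
        * ∫ g, f g * (Ξ g : ℂ) ∂μG :=
  radial_matrix_coefficient_identity_general μG K hK ν hact c hc_meas hc hKinv herg Ξ hΞ f hf_cont
    hf_supp hf_biK ξ η
end

section
/- (Key convolution estimate.) Assume hypothesis (★). Then for every g ∈ Γ: Σ_{γ∈Γ} [Ξ(γ)/(1+L(γ))^{2d}] · [Ξ(γ⁻¹g)/(1+L(γ⁻¹g))^{2d}] ≤ 2^{2d+1} C · Ξ(g)/(1+L(g))^{2d}. -/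
/-!
Write `ρ γ` for the density `d(γ_*ν)/dν`. The chain rule for `γ ↦ γ_*ν` is the cocycle identity
`ρ (g * h) = ρ g · ρ h (g⁻¹ • ·)`, and with it the change of variables `x ↦ g • x` turns
`∫ √(ρ g) √(ρ h) dν` into `Ξ (g⁻¹ * h)`; in particular `Ξ g⁻¹ = Ξ g`. Taking `ξ = √(ρ h)` in (★)
therefore bounds the convolution `Σ_γ w γ · Ξ (γ⁻¹ * h)` by `C · Ξ h`, where
`w γ = Ξ γ / (1 + L γ)^(2d)`.

Since `L g ≤ L γ + L (γ⁻¹ * g)`, one of `1 + L γ` and `1 + L (γ⁻¹ * g)` is at least `(1 + L g) / 2`.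
Hence `w γ · w (γ⁻¹ * g)` is at most `2^(2d) (1 + L g)^(-2d)` times
`w γ · Ξ (γ⁻¹ * g) + Ξ γ · w (γ⁻¹ * g)`, and summing over `γ` each of the two terms is a convolution
of the previous kind, at `g` and, by the symmetry of `Ξ` and `L`, at `g⁻¹`.
-/

open MeasureTheory ENNReal

theorem ENNReal.ofReal_sqrt_eq_rpow (t : ℝ) :
    ENNReal.ofReal (√t) = ENNReal.ofReal t ^ (2⁻¹ : ℝ) := by
  rcases le_total 0 t with ht | ht
  · rw [Real.sqrt_eq_rpow, ofReal_rpow_of_nonneg ht (by norm_num), one_div]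
  · rw [Real.sqrt_eq_zero_of_nonpos ht, ofReal_of_nonpos ht, ofReal_zero,
      zero_rpow_of_pos (by norm_num)]

section DensityCocycle

variable {G X : Type*} [Group G] [MeasurableSpace X] [MulAction G X] [MeasurableConstSMul G X]
  {μ : Measure X}

theorem lintegral_comp_smul_eq_lintegral_density_mul {g : G} {r : X → ℝ≥0∞}
    (hr : Measurable r) (hmap : μ.map (g • ·) = μ.withDensity r)
    {f : X → ℝ≥0∞} (hf : Measurable f) :
    ∫⁻ x, f (g • x) ∂μ = ∫⁻ x, r x * f x ∂μ := by
  rw [← lintegral_map hf (measurable_const_smul g), hmap,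
    lintegral_withDensity_eq_lintegral_mul μ hr hf]
  rfl

variable {ρ : G → X → ℝ≥0∞} (hρ : ∀ g, Measurable (ρ g))
  (hmap : ∀ g, μ.map (g • ·) = μ.withDensity (ρ g))
include hρ hmap

theorem density_mul_ae_eq [SigmaFinite μ] (g h : G) :
    ρ (g * h) =ᵐ[μ] fun x => ρ g x * ρ h (g⁻¹ • x) := by
  have hρh_smul : Measurable fun x => ρ h (g⁻¹ • x) := (hρ h).comp (measurable_const_smul g⁻¹)
  have hprod : Measurable fun x => ρ g x * ρ h (g⁻¹ • x) := (hρ g).mul hρh_smul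
  refine (withDensity_eq_iff_of_sigmaFinite (hρ _).aemeasurable hprod.aemeasurable).mp ?_
  rw [← hmap]
  refine Measure.ext_of_lintegral _ fun f hf => ?_
  calc ∫⁻ x, f x ∂μ.map ((g * h) • ·)
      = ∫⁻ x, f (g • h • x) ∂μ := by
        rw [lintegral_map hf (measurable_const_smul _)]
        simp only [mul_smul]
    _ = ∫⁻ y, ρ h y * f (g • y) ∂μ :=
        lintegral_comp_smul_eq_lintegral_density_mul (hρ h) (hmap h)
          (hf.comp (measurable_const_smul g))
    _ = ∫⁻ y, (fun z => ρ h (g⁻¹ • z) * f z) (g • y) ∂μ := by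
        simp
    _ = ∫⁻ z, ρ g z * (ρ h (g⁻¹ • z) * f z) ∂μ :=
        lintegral_comp_smul_eq_lintegral_density_mul (hρ g) (hmap g) (hρh_smul.mul hf)
    _ = ∫⁻ x, f x ∂μ.withDensity fun x => ρ g x * ρ h (g⁻¹ • x) := by
        rw [lintegral_withDensity_eq_lintegral_mul μ hprod hf]
        simp only [Pi.mul_apply, mul_assoc]

theorem lintegral_sqrt_density_mul_sqrt_density [SigmaFinite μ] (g h : G) :
    ∫⁻ x, ρ g x ^ (2⁻¹ : ℝ) * ρ h x ^ (2⁻¹ : ℝ) ∂μ = ∫⁻ x, ρ (g⁻¹ * h) x ^ (2⁻¹ : ℝ) ∂μ := by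
  set F : X → ℝ≥0∞ := fun x => ρ (g⁻¹ * h) (g⁻¹ • x) ^ (2⁻¹ : ℝ)
  have hF : Measurable F := ((hρ _).comp (measurable_const_smul g⁻¹)).pow_const _
  calc ∫⁻ x, ρ g x ^ (2⁻¹ : ℝ) * ρ h x ^ (2⁻¹ : ℝ) ∂μ
      = ∫⁻ x, ρ g x * F x ∂μ := by
        refine lintegral_congr_ae ?_
        filter_upwards [density_mul_ae_eq hρ hmap g (g⁻¹ * h)] with x hx
        rw [mul_inv_cancel_left] at hx
        rw [hx, mul_rpow_of_nonneg _ _ (by norm_num), ← mul_assoc,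
          ← rpow_add_of_nonneg _ _ (by norm_num) (by norm_num)]
        norm_num [F]
    _ = ∫⁻ x, F (g • x) ∂μ :=
        (lintegral_comp_smul_eq_lintegral_density_mul (hρ g) (hmap g) hF).symm
    _ = ∫⁻ x, ρ (g⁻¹ * h) x ^ (2⁻¹ : ℝ) ∂μ := by simp only [F, inv_smul_smul]

theorem lintegral_sqrt_density_inv [SigmaFinite μ] (g : G) :
    ∫⁻ x, ρ g⁻¹ x ^ (2⁻¹ : ℝ) ∂μ = ∫⁻ x, ρ g x ^ (2⁻¹ : ℝ) ∂μ := by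
  calc ∫⁻ x, ρ g⁻¹ x ^ (2⁻¹ : ℝ) ∂μ = ∫⁻ x, ρ g x ^ (2⁻¹ : ℝ) * ρ 1 x ^ (2⁻¹ : ℝ) ∂μ := by
        rw [lintegral_sqrt_density_mul_sqrt_density hρ hmap, mul_one]
    _ = ∫⁻ x, ρ 1 x ^ (2⁻¹ : ℝ) * ρ g x ^ (2⁻¹ : ℝ) ∂μ := by simp only [mul_comm]
    _ = ∫⁻ x, ρ g x ^ (2⁻¹ : ℝ) ∂μ := by
        rw [lintegral_sqrt_density_mul_sqrt_density hρ hmap, inv_one, one_mul]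

theorem lintegral_sqrt_density_ne_top [IsFiniteMeasure μ] (g : G) :
    ∫⁻ x, ρ g x ^ (2⁻¹ : ℝ) ∂μ ≠ ∞ := by
  have hle : ∀ a : ℝ≥0∞, a ^ (2⁻¹ : ℝ) ≤ 1 + a := fun a => by
    rcases le_total a 1 with ha | ha
    · exact (rpow_le_one ha (by norm_num)).trans le_self_add
    · calc a ^ (2⁻¹ : ℝ) ≤ a ^ (1 : ℝ) := rpow_le_rpow_of_exponent_le ha (by norm_num)
        _ ≤ 1 + a := by rw [rpow_one]; exact le_add_self
  have hint : ∫⁻ x, ρ g x ∂μ = μ Set.univ := by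
    simpa using (lintegral_comp_smul_eq_lintegral_density_mul (hρ g) (hmap g)
      (measurable_const (a := (1 : ℝ≥0∞)))).symm
  refine ne_top_of_le_ne_top ?_ (lintegral_mono fun x => hle (ρ g x))
  rw [lintegral_add_left measurable_const, lintegral_const, hint]
  simp [measure_ne_top]

end DensityCocycle

theorem div_mul_div_le_of_le_add {a b ℓ s x y : ℝ} (ha : 0 ≤ a) (hb : 0 ≤ b) (hℓ : 0 ≤ ℓ)
    (hℓab : ℓ ≤ a + b) (hs : 0 ≤ s) (hx : 0 ≤ x) (hy : 0 ≤ y) :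
    x / (1 + a) ^ s * (y / (1 + b) ^ s)
      ≤ 2 ^ s / (1 + ℓ) ^ s * (x / (1 + a) ^ s * y + x * (y / (1 + b) ^ s)) := by
  wlog hba : b ≤ a generalizing a b x y
  · have := this hb ha (by linarith) hy hx (by linarith)
    linarith [mul_comm (x / (1 + a) ^ s) (y / (1 + b) ^ s), mul_comm x (y / (1 + b) ^ s),
      mul_comm (x / (1 + a) ^ s) y]
  have hA : 0 < (1 + a) ^ s := by positivity
  have hℓa : (1 + ℓ) ^ s ≤ 2 ^ s * (1 + a) ^ s := by
    rw [← Real.mul_rpow (by norm_num) (by linarith)]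
    exact Real.rpow_le_rpow (by linarith) (by linarith) hs
  have hinv : 1 / (1 + a) ^ s ≤ 2 ^ s / (1 + ℓ) ^ s := by
    rw [div_le_div_iff₀ hA (by positivity)]
    linarith
  calc x / (1 + a) ^ s * (y / (1 + b) ^ s) = 1 / (1 + a) ^ s * (x * (y / (1 + b) ^ s)) := by
        ring
    _ ≤ 2 ^ s / (1 + ℓ) ^ s * (x * (y / (1 + b) ^ s)) := by gcongr
    _ ≤ 2 ^ s / (1 + ℓ) ^ s * (x / (1 + a) ^ s * y + x * (y / (1 + b) ^ s)) := by
        gcongr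
        exact le_add_of_nonneg_left (by positivity)

theorem ofReal_div_mul_div_le_of_le_add {a b ℓ s x y : ℝ} (ha : 0 ≤ a) (hb : 0 ≤ b)
    (hℓ : 0 ≤ ℓ) (hℓab : ℓ ≤ a + b) (hs : 0 ≤ s) (hx : 0 ≤ x) (hy : 0 ≤ y) :
    ENNReal.ofReal (x / (1 + a) ^ s * (y / (1 + b) ^ s))
      ≤ ENNReal.ofReal (2 ^ s / (1 + ℓ) ^ s) * (ENNReal.ofReal (x / (1 + a) ^ s) * ENNReal.ofReal y
        + ENNReal.ofReal x * ENNReal.ofReal (y / (1 + b) ^ s)) := by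
  have hpow : ∀ t : ℝ, 0 ≤ t → 0 ≤ (1 + t) ^ s := fun t ht => Real.rpow_nonneg (by linarith) s
  have hxa : 0 ≤ x / (1 + a) ^ s := div_nonneg hx (hpow a ha)
  have hyb : 0 ≤ y / (1 + b) ^ s := div_nonneg hy (hpow b hb)
  rw [← ofReal_mul hxa, ← ofReal_mul hx, ← ofReal_add (mul_nonneg hxa hy) (mul_nonneg hx hyb),
    ← ofReal_mul (div_nonneg (by positivity) (hpow ℓ hℓ))]
  exact ofReal_le_ofReal (div_mul_div_le_of_le_add ha hb hℓ hℓab hs hx hy)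

theorem tsum_mul_inv_mul_eq_of_inv_invariant {Γ R : Type*} [Group Γ] [CommSemiring R]
    [TopologicalSpace R] {u v : Γ → R} (hu : ∀ γ, u γ⁻¹ = u γ) (hv : ∀ γ, v γ⁻¹ = v γ) (g : Γ) :
    ∑' γ, u γ * v (γ⁻¹ * g) = ∑' γ, v γ * u (γ⁻¹ * g⁻¹) := by
  rw [← (Equiv.mulLeft g).tsum_eq]
  refine tsum_congr fun γ => ?_
  rw [Equiv.coe_mulLeft, mul_inv_rev, inv_mul_cancel_right, hv, ← mul_inv_rev, hu, mul_comm]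

theorem tsum_weighted_convolution_le {Γ : Type*} [Group Γ] {Ξ L : Γ → ℝ}
    (hΞ : ∀ γ, 0 ≤ Ξ γ) (hΞ_inv : ∀ γ, Ξ γ⁻¹ = Ξ γ) (hL_nonneg : ∀ γ, 0 ≤ L γ)
    (hL_inv : ∀ γ, L γ⁻¹ = L γ) (hL_sub : ∀ γ δ : Γ, L (γ * δ) ≤ L γ + L δ)
    {s C : ℝ} (hs : 0 ≤ s) (hC : 0 ≤ C)
    (hconv : ∀ h : Γ, ∑' γ, ENNReal.ofReal (Ξ γ / (1 + L γ) ^ s) * ENNReal.ofReal (Ξ (γ⁻¹ * h))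
      ≤ ENNReal.ofReal C * ENNReal.ofReal (Ξ h)) (g : Γ) :
    ∑' γ, ENNReal.ofReal ((Ξ γ / (1 + L γ) ^ s) * (Ξ (γ⁻¹ * g) / (1 + L (γ⁻¹ * g)) ^ s))
      ≤ ENNReal.ofReal (2 ^ (s + 1) * C * (Ξ g / (1 + L g) ^ s)) := by
  set w : Γ → ℝ := fun γ => Ξ γ / (1 + L γ) ^ s
  set K : ℝ := 2 ^ s / (1 + L g) ^ s
  have hK : 0 ≤ K := div_nonneg (by positivity) (Real.rpow_nonneg (by linarith [hL_nonneg g]) s)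
  have hterm : ∀ γ, ENNReal.ofReal (w γ * w (γ⁻¹ * g))
      ≤ ENNReal.ofReal K * (ENNReal.ofReal (w γ) * ENNReal.ofReal (Ξ (γ⁻¹ * g))
        + ENNReal.ofReal (Ξ γ) * ENNReal.ofReal (w (γ⁻¹ * g))) := fun γ =>
    ofReal_div_mul_div_le_of_le_add (hL_nonneg γ) (hL_nonneg _) (hL_nonneg g)
      (by simpa using hL_sub γ (γ⁻¹ * g)) hs (hΞ γ) (hΞ _)
  have hswap : ∑' γ, ENNReal.ofReal (Ξ γ) * ENNReal.ofReal (w (γ⁻¹ * g))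
      = ∑' γ, ENNReal.ofReal (w γ) * ENNReal.ofReal (Ξ (γ⁻¹ * g⁻¹)) :=
    tsum_mul_inv_mul_eq_of_inv_invariant (u := fun γ => ENNReal.ofReal (Ξ γ))
      (v := fun γ => ENNReal.ofReal (w γ)) (fun γ => by simp only [hΞ_inv])
      (fun γ => by simp only [w, hΞ_inv, hL_inv]) g
  calc ∑' γ, ENNReal.ofReal (w γ * w (γ⁻¹ * g))
      ≤ ∑' γ, ENNReal.ofReal K * (ENNReal.ofReal (w γ) * ENNReal.ofReal (Ξ (γ⁻¹ * g))
        + ENNReal.ofReal (Ξ γ) * ENNReal.ofReal (w (γ⁻¹ * g))) := ENNReal.tsum_le_tsum hterm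
    _ = ENNReal.ofReal K * (∑' γ, ENNReal.ofReal (w γ) * ENNReal.ofReal (Ξ (γ⁻¹ * g))
        + ∑' γ, ENNReal.ofReal (w γ) * ENNReal.ofReal (Ξ (γ⁻¹ * g⁻¹))) := by
      rw [ENNReal.tsum_mul_left, ENNReal.tsum_add, hswap]
    _ ≤ ENNReal.ofReal K * (ENNReal.ofReal C * ENNReal.ofReal (Ξ g)
        + ENNReal.ofReal C * ENNReal.ofReal (Ξ g)) := by
      grw [hconv g, hconv g⁻¹, hΞ_inv]
    _ = ENNReal.ofReal (2 ^ (s + 1) * C * (Ξ g / (1 + L g) ^ s)) := by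
      have hCΞ : 0 ≤ C * Ξ g := mul_nonneg hC (hΞ g)
      rw [← ofReal_mul hC, ← ofReal_add hCΞ hCΞ, ← ofReal_mul hK,
        Real.rpow_add_one two_ne_zero]
      congr 1
      ring

theorem key_convolution_estimate_general
    {Γ : Type*} [Group Γ]
    {X : Type*} [MeasurableSpace X] [MulAction Γ X]
    (ν : Measure X) [IsProbabilityMeasure ν]
    (hact : ∀ γ : Γ, Measurable (fun x : X => γ • x))
    (c : Γ → X → ℝ)
    (hc_meas : ∀ γ : Γ, Measurable (c γ))
    (hc : ∀ γ : Γ, Measure.map (fun x : X => γ • x) ν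
        = ν.withDensity (fun x => ENNReal.ofReal (c γ x)))
    (Ξ : Γ → ℝ) (hΞ : ∀ γ : Γ, Ξ γ = ∫ x, Real.sqrt (c γ x) ∂ν)
    (L : Γ → ℝ) (hL_nonneg : ∀ γ, 0 ≤ L γ)
    (hL_inv : ∀ γ, L γ⁻¹ = L γ) (hL_sub : ∀ γ δ : Γ, L (γ * δ) ≤ L γ + L δ)
    (d : ℝ) (hd : 0 < d) (C : ℝ) (hC : 0 < C)
    (hstar : ∀ ξ : X → ℝ≥0∞, Measurable ξ →
      ∑' γ : Γ, ENNReal.ofReal (Ξ γ / (1 + L γ) ^ (2 * d))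
          * ∫⁻ x, ENNReal.ofReal (Real.sqrt (c γ x)) * ξ x ∂ν
        ≤ ENNReal.ofReal C * ∫⁻ x, ξ x ∂ν) :
    ∀ g : Γ,
      ∑' γ : Γ, ENNReal.ofReal ((Ξ γ / (1 + L γ) ^ (2 * d))
          * (Ξ (γ⁻¹ * g) / (1 + L (γ⁻¹ * g)) ^ (2 * d)))
        ≤ ENNReal.ofReal ((2 : ℝ) ^ (2 * d + 1) * C * (Ξ g / (1 + L g) ^ (2 * d))) := by
  have : MeasurableConstSMul Γ X := ⟨hact⟩
  set ρ : Γ → X → ℝ≥0∞ := fun γ x => ENNReal.ofReal (c γ x)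
  have hρ : ∀ γ, Measurable (ρ γ) := fun γ => (hc_meas γ).ennreal_ofReal
  have hsqrt : ∀ γ x, ENNReal.ofReal (√(c γ x)) = ρ γ x ^ (2⁻¹ : ℝ) := fun γ x =>
    ENNReal.ofReal_sqrt_eq_rpow _
  have hΞ_nonneg : ∀ γ, 0 ≤ Ξ γ := fun γ => hΞ γ ▸ integral_nonneg fun _ => Real.sqrt_nonneg _
  have hΞρ : ∀ γ, ENNReal.ofReal (Ξ γ) = ∫⁻ x, ρ γ x ^ (2⁻¹ : ℝ) ∂ν := fun γ => by
    rw [hΞ, integral_eq_lintegral_of_nonneg_ae (ae_of_all _ fun _ => Real.sqrt_nonneg _)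
      (hc_meas γ).sqrt.aestronglyMeasurable]
    simp_rw [hsqrt]
    exact ofReal_toReal (lintegral_sqrt_density_ne_top hρ hc γ)
  have hΞ_inv : ∀ γ, Ξ γ⁻¹ = Ξ γ := fun γ => by
    rw [← ofReal_eq_ofReal_iff (hΞ_nonneg _) (hΞ_nonneg _), hΞρ, hΞρ,
      lintegral_sqrt_density_inv hρ hc]
  refine tsum_weighted_convolution_le hΞ_nonneg hΞ_inv hL_nonneg hL_inv hL_sub (by linarith) hC.le
    (fun h => ?_)
  calc ∑' γ, ENNReal.ofReal (Ξ γ / (1 + L γ) ^ (2 * d)) * ENNReal.ofReal (Ξ (γ⁻¹ * h))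
      = ∑' γ, ENNReal.ofReal (Ξ γ / (1 + L γ) ^ (2 * d))
          * ∫⁻ x, ENNReal.ofReal (√(c γ x)) * ENNReal.ofReal (√(c h x)) ∂ν := by
        simp_rw [hsqrt, hΞρ, lintegral_sqrt_density_mul_sqrt_density hρ hc]
    _ ≤ ENNReal.ofReal C * ENNReal.ofReal (Ξ h) := by
        rw [hΞρ, ← lintegral_congr (hsqrt h)]
        exact hstar _ (hc_meas h).sqrt.ennreal_ofReal

/-- Key convolution estimate: under hypothesis (★), for every `g ∈ Γ`,
`Σ_{γ∈Γ} [Ξ(γ)/(1+L(γ))^{2d}] [Ξ(γ⁻¹g)/(1+L(γ⁻¹g))^{2d}]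
  ≤ 2^{2d+1} C Ξ(g)/(1+L(g))^{2d}`. -/
theorem key_convolution_estimate
    {Γ : Type*} [Group Γ] [Countable Γ]
    {X : Type*} [MeasurableSpace X] [MulAction Γ X]
    (ν : Measure X) [IsProbabilityMeasure ν]
    (hact : ∀ γ : Γ, Measurable (fun x : X => γ • x))
    (c : Γ → X → ℝ)
    (hc_meas : ∀ γ : Γ, Measurable (c γ))
    (hc_pos : ∀ γ : Γ, ∀ᵐ x ∂ν, 0 < c γ x)
    (hc : ∀ γ : Γ, Measure.map (fun x : X => γ • x) ν
        = ν.withDensity (fun x => ENNReal.ofReal (c γ x)))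
    (Ξ : Γ → ℝ) (hΞ : ∀ γ : Γ, Ξ γ = ∫ x, Real.sqrt (c γ x) ∂ν)
    (L : Γ → ℝ) (hL_nonneg : ∀ γ, 0 ≤ L γ) (hL_one : L 1 = 0)
    (hL_inv : ∀ γ, L γ⁻¹ = L γ) (hL_sub : ∀ γ δ : Γ, L (γ * δ) ≤ L γ + L δ)
    (d : ℝ) (hd : 0 < d) (C : ℝ) (hC : 0 < C)
    (hstar : ∀ ξ : X → ℝ≥0∞, Measurable ξ →
      ∑' γ : Γ, ENNReal.ofReal (Ξ γ / (1 + L γ) ^ (2 * d))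
          * ∫⁻ x, ENNReal.ofReal (Real.sqrt (c γ x)) * ξ x ∂ν
        ≤ ENNReal.ofReal C * ∫⁻ x, ξ x ∂ν) :
    ∀ g : Γ,
      ∑' γ : Γ, ENNReal.ofReal ((Ξ γ / (1 + L γ) ^ (2 * d))
          * (Ξ (γ⁻¹ * g) / (1 + L (γ⁻¹ * g)) ^ (2 * d)))
        ≤ ENNReal.ofReal ((2 : ℝ) ^ (2 * d + 1) * C * (Ξ g / (1 + L g) ^ (2 * d))) :=
  key_convolution_estimate_general ν hact c hc_meas hc Ξ hΞ L hL_nonneg hL_inv hL_sub d hd C hC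
    hstar
end

section
/- (Abstract form of Theorem 1.2, Item (1).) Assume hypothesis (★). Then for all finitely supported functions f₁, f₂: Γ → ℂ, the convolution (f₁ * f₂)(g) = Σ_{γ∈Γ} f₁(γ) f₂(γ⁻¹g) satisfies ‖f₁ * f₂‖_{S^{2d}} ≤ 2^{2d+1} C · ‖f₁‖_{S^{2d}} · ‖f₂‖_{S^{2d}}; that is, the weighted norm ‖·‖_{S^{2d}} is submultiplicative up to the constant 2^{2d+1} C. -/
open MeasureTheory ENNReal

/-!
The Radon–Nikodym cocycle identity `c (α * β) x = c α x * c β (α⁻¹ • x)` says that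
`γ ↦ √(c γ)` is the orbit of the constant function `1` under the Koopman representation, which is
unitary; hence `∫ √(c γ) √(c h) dν = Ξ (γ⁻¹ * h)`, and in particular `Ξ γ⁻¹ = Ξ γ`. Testing (★)
on `ξ = √(c h)` thus gives `∑ γ, Ξ γ / (1 + L γ) ^ (2d) * Ξ (γ⁻¹ * h) ≤ C * Ξ h`. Subadditivity of
`L` gives `(1 + L (γ * δ)) ^ (2d) ≤ 2 ^ (2d) * ((1 + L γ) ^ (2d) + (1 + L δ) ^ (2d))`, which splits
every term of a convolution into two pieces, each controlled by that sum (one of them after the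
substitution `γ ↦ h⁻¹ * γ`).
-/

lemma map_withDensity_comp {α β : Type*} [MeasurableSpace α] [MeasurableSpace β]
    (μ : Measure α) {f : α → β} (hf : Measurable f) {g : β → ℝ≥0∞} (hg : Measurable g) :
    (μ.withDensity (g ∘ f)).map f = (μ.map f).withDensity g := by
  ext s hs
  rw [Measure.map_apply hf hs, withDensity_apply _ (hf hs), withDensity_apply _ hs,
    setLIntegral_map hs hg hf, Function.comp_def]

lemma sum_le_of_tsum_ofReal_le {ι : Type*} {a : ι → ℝ} {b : ℝ} (ha : ∀ i, 0 ≤ a i) (hb : 0 ≤ b)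
    (h : ∑' i, ENNReal.ofReal (a i) ≤ ENNReal.ofReal b) (t : Finset ι) : ∑ i ∈ t, a i ≤ b := by
  rw [← ENNReal.ofReal_le_ofReal_iff hb, ENNReal.ofReal_sum_of_nonneg fun i _ => ha i]
  exact (ENNReal.sum_le_tsum t).trans h

lemma one_add_rpow_le_two_rpow_mul {a b x p : ℝ} (ha : 0 ≤ a) (hb : 0 ≤ b) (hx : 0 ≤ x)
    (hxab : x ≤ a + b) (hp : 0 ≤ p) :
    (1 + x) ^ p ≤ 2 ^ p * ((1 + a) ^ p + (1 + b) ^ p) := by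
  calc (1 + x) ^ p ≤ (2 * (1 + max a b)) ^ p :=
        Real.rpow_le_rpow (by positivity) (by linarith [le_max_left a b, le_max_right a b]) hp
    _ = 2 ^ p * (1 + max a b) ^ p := Real.mul_rpow zero_le_two (by positivity)
    _ ≤ 2 ^ p * ((1 + a) ^ p + (1 + b) ^ p) := by
        gcongr
        rcases max_cases a b with ⟨h, _⟩ | ⟨h, _⟩ <;> rw [h]
        · linarith [Real.rpow_nonneg (by linarith : (0 : ℝ) ≤ 1 + b) p]
        · linarith [Real.rpow_nonneg (by linarith : (0 : ℝ) ≤ 1 + a) p]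

structure IsRadonNikodymCocycle_s12 {Γ X : Type*} [Group Γ] [MeasurableSpace X] [MulAction Γ X]
    (ν : Measure X) (c : Γ → X → ℝ) : Prop where
  measurable_smul (γ : Γ) : Measurable (γ • · : X → X)
  measurable (γ : Γ) : Measurable (c γ)
  ae_pos (γ : Γ) : ∀ᵐ x ∂ν, 0 < c γ x
  map_smul (γ : Γ) : ν.map (γ • ·) = ν.withDensity (fun x => ENNReal.ofReal (c γ x))

noncomputable def harishChandra {Γ X : Type*} [MeasurableSpace X] (ν : Measure X)
    (c : Γ → X → ℝ) (γ : Γ) : ℝ :=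
  ∫ x, √(c γ x) ∂ν

theorem harishChandra_nonneg {Γ X : Type*} [MeasurableSpace X] (ν : Measure X)
    (c : Γ → X → ℝ) (γ : Γ) : 0 ≤ harishChandra ν c γ :=
  integral_nonneg fun _ => Real.sqrt_nonneg _

namespace IsRadonNikodymCocycle_s12

variable {Γ X : Type*} [Group Γ] [MeasurableSpace X] [MulAction Γ X] {ν : Measure X}
  {c : Γ → X → ℝ}

theorem quasiMeasurePreserving_smul_s12 (hc : IsRadonNikodymCocycle_s12 ν c) (γ : Γ) :
    Measure.QuasiMeasurePreserving (γ • · : X → X) ν ν :=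
  ⟨hc.measurable_smul γ, by rw [hc.map_smul γ]; exact withDensity_absolutelyContinuous _ _⟩

theorem lintegral_ofReal_mul_comp_smul (hc : IsRadonNikodymCocycle_s12 ν c) (γ : Γ)
    {F : X → ℝ≥0∞} (hF : Measurable F) :
    ∫⁻ x, ENNReal.ofReal (c γ⁻¹ x) * F (γ • x) ∂ν = ∫⁻ x, F x ∂ν := by
  have hFγ : Measurable fun x => F (γ • x) := hF.comp (hc.measurable_smul γ)
  calc ∫⁻ x, ENNReal.ofReal (c γ⁻¹ x) * F (γ • x) ∂ν
      = ∫⁻ x, F (γ • x) ∂(ν.map (γ⁻¹ • ·)) := by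
        rw [hc.map_smul, lintegral_withDensity_eq_lintegral_mul _
          (hc.measurable γ⁻¹).ennreal_ofReal hFγ]
        rfl
    _ = ∫⁻ x, F x ∂ν := by
        rw [lintegral_map hFγ (hc.measurable_smul γ⁻¹)]
        simp only [smul_inv_smul]

theorem map_mul_smul (hc : IsRadonNikodymCocycle_s12 ν c) (α β : Γ) :
    ν.map ((α * β) • ·) = ν.withDensity
      (fun x => ENNReal.ofReal (c α x) * ENNReal.ofReal (c β (α⁻¹ • x))) := by
  have hβ : Measurable fun x => ENNReal.ofReal (c β (α⁻¹ • x)) :=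
    (hc.measurable β).ennreal_ofReal.comp (hc.measurable_smul α⁻¹)
  calc ν.map ((α * β) • ·)
      = (ν.map (β • ·)).map (α • ·) := by
        rw [Measure.map_map (hc.measurable_smul α) (hc.measurable_smul β)]
        simp only [Function.comp_def, mul_smul]
    _ = (ν.withDensity ((fun x => ENNReal.ofReal (c β (α⁻¹ • x))) ∘ (α • ·))).map (α • ·) := by
        simp only [hc.map_smul β, Function.comp_def, inv_smul_smul]
    _ = (ν.withDensity fun x => ENNReal.ofReal (c α x)).withDensity
          fun x => ENNReal.ofReal (c β (α⁻¹ • x)) := by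
        rw [map_withDensity_comp ν (hc.measurable_smul α) hβ, hc.map_smul α]
    _ = _ := (withDensity_mul ν (hc.measurable α).ennreal_ofReal hβ).symm

theorem ae_mul_eq [SigmaFinite ν] (hc : IsRadonNikodymCocycle_s12 ν c) (α β : Γ) :
    ∀ᵐ x ∂ν, c (α * β) x = c α x * c β (α⁻¹ • x) := by
  have h := (withDensity_eq_iff_of_sigmaFinite
    (hc.measurable (α * β)).ennreal_ofReal.aemeasurable
    ((hc.measurable α).ennreal_ofReal.mul
      ((hc.measurable β).ennreal_ofReal.comp (hc.measurable_smul α⁻¹))).aemeasurable).1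
    ((hc.map_smul (α * β)).symm.trans (hc.map_mul_smul α β))
  filter_upwards [h, hc.ae_pos (α * β), hc.ae_pos α,
    (hc.quasiMeasurePreserving_smul_s12 α⁻¹).ae (hc.ae_pos β)] with x hx hαβ hα hβ
  rw [Pi.mul_apply, Function.comp_apply, ← ENNReal.ofReal_mul hα.le,
    ENNReal.ofReal_eq_ofReal_iff hαβ.le (mul_pos hα hβ).le] at hx
  exact hx

theorem ae_one [SigmaFinite ν] (hc : IsRadonNikodymCocycle_s12 ν c) : ∀ᵐ x ∂ν, c 1 x = 1 := by
  filter_upwards [hc.ae_mul_eq 1 1, hc.ae_pos 1] with x hx hpos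
  simp only [mul_one, inv_one, one_smul] at hx
  exact (mul_eq_left₀ hpos.ne').1 hx.symm

theorem ae_inv_mul_comp_smul [SigmaFinite ν] (hc : IsRadonNikodymCocycle_s12 ν c) (γ : Γ) :
    ∀ᵐ x ∂ν, c γ⁻¹ x * c γ (γ • x) = 1 := by
  filter_upwards [hc.ae_mul_eq γ⁻¹ γ, hc.ae_one] with x hx h1
  rwa [inv_mul_cancel, inv_inv, h1, eq_comm] at hx


theorem lintegral_ofReal (hc : IsRadonNikodymCocycle_s12 ν c) (γ : Γ) :
    ∫⁻ x, ENNReal.ofReal (c γ x) ∂ν = ν Set.univ := by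
  rw [← setLIntegral_univ, ← withDensity_apply _ MeasurableSet.univ, ← hc.map_smul,
    Measure.map_apply (hc.measurable_smul γ) MeasurableSet.univ, Set.preimage_univ]

theorem integrable [IsFiniteMeasure ν] (hc : IsRadonNikodymCocycle_s12 ν c) (γ : Γ) :
    Integrable (c γ) ν :=
  ⟨(hc.measurable γ).aestronglyMeasurable,
    (hasFiniteIntegral_iff_ofReal ((hc.ae_pos γ).mono fun _ hx => hx.le)).2
      (by rw [hc.lintegral_ofReal]; exact measure_lt_top ν _)⟩

theorem integrable_sqrt [IsFiniteMeasure ν] (hc : IsRadonNikodymCocycle_s12 ν c) (γ : Γ) :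
    Integrable (fun x => √(c γ x)) ν := by
  refine ((integrable_const 1).add (hc.integrable γ)).mono'
    (hc.measurable γ).sqrt.aestronglyMeasurable ?_
  filter_upwards [hc.ae_pos γ] with x hx
  rw [Real.norm_of_nonneg (Real.sqrt_nonneg _), Pi.add_apply]
  nlinarith [Real.sq_sqrt hx.le, Real.sqrt_nonneg (c γ x)]

theorem ofReal_harishChandra [IsFiniteMeasure ν] (hc : IsRadonNikodymCocycle_s12 ν c) (γ : Γ) :
    ENNReal.ofReal (harishChandra ν c γ) = ∫⁻ x, ENNReal.ofReal √(c γ x) ∂ν :=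
  ofReal_integral_eq_lintegral_ofReal (hc.integrable_sqrt γ)
    (ae_of_all _ fun _ => Real.sqrt_nonneg _)

theorem harishChandra_pos [IsFiniteMeasure ν] [NeZero ν] (hc : IsRadonNikodymCocycle_s12 ν c)
    (γ : Γ) : 0 < harishChandra ν c γ := by
  rw [harishChandra, integral_pos_iff_support_of_nonneg_ae
    (ae_of_all _ fun _ => Real.sqrt_nonneg _) (hc.integrable_sqrt γ)]
  have hfull : Function.support (fun x => √(c γ x)) =ᵐ[ν] Set.univ :=
    ae_eq_univ.2 (ae_iff.1 ((hc.ae_pos γ).mono fun _ hx => (Real.sqrt_pos.2 hx).ne'))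
  rw [measure_congr hfull]
  exact Measure.measure_univ_pos.2 (NeZero.ne ν)

theorem lintegral_sqrt_mul_sqrt [IsFiniteMeasure ν] (hc : IsRadonNikodymCocycle_s12 ν c) (γ h : Γ) :
    ∫⁻ x, ENNReal.ofReal √(c γ x) * ENNReal.ofReal √(c h x) ∂ν
      = ENNReal.ofReal (harishChandra ν c (γ⁻¹ * h)) := by
  rw [hc.ofReal_harishChandra, ← hc.lintegral_ofReal_mul_comp_smul γ
    (F := fun x => ENNReal.ofReal √(c γ x) * ENNReal.ofReal √(c h x))
    ((hc.measurable γ).sqrt.ennreal_ofReal.mul (hc.measurable h).sqrt.ennreal_ofReal)]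
  refine lintegral_congr_ae ?_
  filter_upwards [hc.ae_inv_mul_comp_smul γ, hc.ae_mul_eq γ⁻¹ h, hc.ae_pos γ⁻¹]
    with x hinv hmul hpos
  rw [inv_inv] at hmul
  rw [← ENNReal.ofReal_mul (Real.sqrt_nonneg _), ← ENNReal.ofReal_mul hpos.le, hmul,
    Real.sqrt_mul hpos.le]
  -- `c γ⁻¹ x * c γ (γ • x) = c 1 x = 1` turns the factor `c γ⁻¹ x * √(c γ (γ • x))`
  -- into `√(c γ⁻¹ x)`.
  have hsqrt : √(c γ⁻¹ x) * √(c γ (γ • x)) = 1 := by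
    rw [← Real.sqrt_mul hpos.le, hinv, Real.sqrt_one]
  congr 1
  linear_combination (√(c γ⁻¹ x) * √(c h (γ • x))) * hsqrt
    - (√(c γ (γ • x)) * √(c h (γ • x))) * Real.mul_self_sqrt hpos.le

theorem harishChandra_inv [IsFiniteMeasure ν] (hc : IsRadonNikodymCocycle_s12 ν c) (γ : Γ) :
    harishChandra ν c γ⁻¹ = harishChandra ν c γ := by
  have h := hc.lintegral_sqrt_mul_sqrt γ 1
  rw [mul_one, lintegral_congr_ae (g := fun x => ENNReal.ofReal √(c γ x))
      (hc.ae_one.mono fun x hx => by simp [hx]), ← hc.ofReal_harishChandra, ENNReal.ofReal_eq_ofReal_iff (harishChandra_nonneg ν c γ)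
      (harishChandra_nonneg ν c γ⁻¹)] at h
  exact h.symm

theorem sum_mul_harishChandra_le [IsFiniteMeasure ν] (hc : IsRadonNikodymCocycle_s12 ν c)
    (w : Γ → ℝ) (hw : ∀ γ, 0 ≤ w γ) {C : ℝ} (hC : 0 ≤ C)
    (hstar : ∀ ξ : X → ℝ≥0∞, Measurable ξ →
      ∑' γ, ENNReal.ofReal (w γ) * ∫⁻ x, ENNReal.ofReal √(c γ x) * ξ x ∂ν
        ≤ ENNReal.ofReal C * ∫⁻ x, ξ x ∂ν)
    (h : Γ) (t : Finset Γ) :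
    ∑ γ ∈ t, w γ * harishChandra ν c (γ⁻¹ * h) ≤ C * harishChandra ν c h := by
  have H := hstar _ (hc.measurable h).sqrt.ennreal_ofReal
  simp only [hc.lintegral_sqrt_mul_sqrt, ← hc.ofReal_harishChandra,
    ← ENNReal.ofReal_mul (hw _), ← ENNReal.ofReal_mul hC] at H
  exact sum_le_of_tsum_ofReal_le (fun γ => mul_nonneg (hw γ) (harishChandra_nonneg ν c _))
    (mul_nonneg hC (harishChandra_nonneg ν c h)) H t

end IsRadonNikodymCocycle_s12

noncomputable def schwartzNorm {Γ R : Type*} [Norm R] (Ξ L : Γ → ℝ) (p : ℝ) (f : Γ → R) : ℝ :=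
  ⨆ γ, ‖f γ‖ * (1 + L γ) ^ p / Ξ γ

section SchwartzNorm

variable {Γ R : Type*} {Ξ L : Γ → ℝ} {p : ℝ}

theorem schwartzNorm_nonneg [SeminormedAddGroup R] (hΞ : ∀ γ, 0 ≤ Ξ γ) (hL : ∀ γ, 0 ≤ L γ)
    (f : Γ → R) :
    0 ≤ schwartzNorm Ξ L p f :=
  Real.iSup_nonneg fun γ =>
    div_nonneg (mul_nonneg (norm_nonneg _) (Real.rpow_nonneg (by linarith [hL γ]) p)) (hΞ γ)

theorem norm_mul_rpow_le_schwartzNorm_mul [SeminormedAddGroup R] {f : Γ → R}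
    (hf : f.support.Finite) {γ : Γ} (hγ : 0 < Ξ γ) :
    ‖f γ‖ * (1 + L γ) ^ p ≤ schwartzNorm Ξ L p f * Ξ γ := by
  rw [← div_le_iff₀ hγ]
  set g : Γ → ℝ := fun γ => ‖f γ‖ * (1 + L γ) ^ p / Ξ γ
  have hg : g.support.Finite := hf.subset fun γ hγ hfγ => hγ (by simp [g, hfγ])
  exact le_ciSup (((hg.image g).insert 0).bddAbove.mono
    (Function.range_subset_insert_image_support g)) γ

theorem sum_mul_div_rpow_le_of_sum_div_rpow_mul_le [Group Γ] (hΞ_inv : ∀ γ, Ξ γ⁻¹ = Ξ γ)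
    (hL_inv : ∀ γ, L γ⁻¹ = L γ) {C : ℝ}
    (hsum : ∀ (h : Γ) (t : Finset Γ), ∑ γ ∈ t, Ξ γ / (1 + L γ) ^ p * Ξ (γ⁻¹ * h) ≤ C * Ξ h)
    (h : Γ) (t : Finset Γ) :
    ∑ γ ∈ t, Ξ γ * (Ξ (γ⁻¹ * h) / (1 + L (γ⁻¹ * h)) ^ p) ≤ C * Ξ h := by
  calc ∑ γ ∈ t, Ξ γ * (Ξ (γ⁻¹ * h) / (1 + L (γ⁻¹ * h)) ^ p)
      = ∑ ε ∈ t.map (mulLeftEmbedding h⁻¹), Ξ ε / (1 + L ε) ^ p * Ξ (ε⁻¹ * h⁻¹) := by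
        rw [Finset.sum_map]
        refine Finset.sum_congr rfl fun γ _ => ?_
        have hε : (h⁻¹ * γ)⁻¹ = γ⁻¹ * h := by group
        rw [mulLeftEmbedding_apply, ← hΞ_inv (h⁻¹ * γ), ← hL_inv (h⁻¹ * γ), hε,
          mul_inv_cancel_right, hΞ_inv, mul_comm]
    _ ≤ C * Ξ h⁻¹ := hsum h⁻¹ _
    _ = C * Ξ h := by rw [hΞ_inv]

theorem norm_mul_mul_rpow_le [Group Γ] [NormedRing R] (hΞ : ∀ γ, 0 < Ξ γ) (hL : ∀ γ, 0 ≤ L γ)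
    (hL_mul : ∀ γ δ, L (γ * δ) ≤ L γ + L δ) (hp : 0 ≤ p) {f₁ f₂ : Γ → R}
    (hf₁ : f₁.support.Finite) (hf₂ : f₂.support.Finite) (γ δ : Γ) :
    ‖f₁ γ * f₂ δ‖ * (1 + L (γ * δ)) ^ p
      ≤ 2 ^ p * (schwartzNorm Ξ L p f₁ * schwartzNorm Ξ L p f₂)
        * (Ξ γ * (Ξ δ / (1 + L δ) ^ p) + Ξ γ / (1 + L γ) ^ p * Ξ δ) := by
  have hN₁ := schwartzNorm_nonneg (p := p) (fun γ => (hΞ γ).le) hL f₁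
  have hγ : 0 < (1 + L γ) ^ p := Real.rpow_pos_of_pos (by linarith [hL γ]) p
  have hδ : 0 < (1 + L δ) ^ p := Real.rpow_pos_of_pos (by linarith [hL δ]) p
  have h₁ := norm_mul_rpow_le_schwartzNorm_mul (L := L) (p := p) hf₁ (hΞ γ)
  have h₂ := norm_mul_rpow_le_schwartzNorm_mul (L := L) (p := p) hf₂ (hΞ δ)
  have h₁' : ‖f₁ γ‖ ≤ schwartzNorm Ξ L p f₁ * (Ξ γ / (1 + L γ) ^ p) := by
    rwa [← mul_div_assoc, le_div_iff₀ hγ]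
  have h₂' : ‖f₂ δ‖ ≤ schwartzNorm Ξ L p f₂ * (Ξ δ / (1 + L δ) ^ p) := by
    rwa [← mul_div_assoc, le_div_iff₀ hδ]
  calc ‖f₁ γ * f₂ δ‖ * (1 + L (γ * δ)) ^ p
      ≤ ‖f₁ γ‖ * ‖f₂ δ‖ * (2 ^ p * ((1 + L γ) ^ p + (1 + L δ) ^ p)) :=
        mul_le_mul (norm_mul_le _ _) (one_add_rpow_le_two_rpow_mul (hL γ) (hL δ) (hL _)
          (hL_mul γ δ) hp) (Real.rpow_nonneg (by linarith [hL (γ * δ)]) p) (by positivity)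
    _ = 2 ^ p * (‖f₁ γ‖ * (1 + L γ) ^ p * ‖f₂ δ‖ + ‖f₁ γ‖ * (‖f₂ δ‖ * (1 + L δ) ^ p)) := by ring
    _ ≤ 2 ^ p * (schwartzNorm Ξ L p f₁ * Ξ γ * (schwartzNorm Ξ L p f₂ * (Ξ δ / (1 + L δ) ^ p))
          + schwartzNorm Ξ L p f₁ * (Ξ γ / (1 + L γ) ^ p) * (schwartzNorm Ξ L p f₂ * Ξ δ)) := by
        gcongr
        exacts [mul_nonneg hN₁ (hΞ γ).le, mul_nonneg hN₁ (div_nonneg (hΞ γ).le hγ.le)]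
    _ = _ := by ring

theorem norm_conv_mul_rpow_le [Group Γ] [NormedRing R] (hΞ : ∀ γ, 0 < Ξ γ)
    (hΞ_inv : ∀ γ, Ξ γ⁻¹ = Ξ γ) (hL : ∀ γ, 0 ≤ L γ) (hL_inv : ∀ γ, L γ⁻¹ = L γ)
    (hL_mul : ∀ γ δ, L (γ * δ) ≤ L γ + L δ) (hp : 0 ≤ p) {C : ℝ}
    (hsum : ∀ (h : Γ) (t : Finset Γ), ∑ γ ∈ t, Ξ γ / (1 + L γ) ^ p * Ξ (γ⁻¹ * h) ≤ C * Ξ h)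
    {f₁ f₂ : Γ → R} (hf₁ : f₁.support.Finite) (hf₂ : f₂.support.Finite) (g : Γ) :
    ‖∑' γ, f₁ γ * f₂ (γ⁻¹ * g)‖ * (1 + L g) ^ p
      ≤ 2 ^ (p + 1) * C * (schwartzNorm Ξ L p f₁ * schwartzNorm Ξ L p f₂) * Ξ g := by
  set s := hf₁.toFinset
  have hN := mul_nonneg (schwartzNorm_nonneg (p := p) (fun γ => (hΞ γ).le) hL f₁)
    (schwartzNorm_nonneg (p := p) (fun γ => (hΞ γ).le) hL f₂)
  have htsum : ∑' γ, f₁ γ * f₂ (γ⁻¹ * g) = ∑ γ ∈ s, f₁ γ * f₂ (γ⁻¹ * g) :=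
    tsum_eq_sum fun γ hγ => by
      rw [Set.Finite.mem_toFinset, Function.notMem_support] at hγ
      rw [hγ, zero_mul]
  calc ‖∑' γ, f₁ γ * f₂ (γ⁻¹ * g)‖ * (1 + L g) ^ p
      ≤ ∑ γ ∈ s, ‖f₁ γ * f₂ (γ⁻¹ * g)‖ * (1 + L (γ * (γ⁻¹ * g))) ^ p := by
        simp only [htsum, mul_inv_cancel_left, ← Finset.sum_mul]
        gcongr
        · exact Real.rpow_nonneg (by linarith [hL g]) p
        · exact norm_sum_le _ _
    _ ≤ ∑ γ ∈ s, 2 ^ p * (schwartzNorm Ξ L p f₁ * schwartzNorm Ξ L p f₂)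
          * (Ξ γ * (Ξ (γ⁻¹ * g) / (1 + L (γ⁻¹ * g)) ^ p)
            + Ξ γ / (1 + L γ) ^ p * Ξ (γ⁻¹ * g)) :=
        Finset.sum_le_sum fun γ _ => norm_mul_mul_rpow_le hΞ hL hL_mul hp hf₁ hf₂ γ _
    _ = 2 ^ p * (schwartzNorm Ξ L p f₁ * schwartzNorm Ξ L p f₂)
          * (∑ γ ∈ s, Ξ γ * (Ξ (γ⁻¹ * g) / (1 + L (γ⁻¹ * g)) ^ p)
            + ∑ γ ∈ s, Ξ γ / (1 + L γ) ^ p * Ξ (γ⁻¹ * g)) := by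
        rw [← Finset.mul_sum, Finset.sum_add_distrib]
    _ ≤ 2 ^ p * (schwartzNorm Ξ L p f₁ * schwartzNorm Ξ L p f₂) * (C * Ξ g + C * Ξ g) := by
        gcongr
        · exact sum_mul_div_rpow_le_of_sum_div_rpow_mul_le hΞ_inv hL_inv hsum g s
        · exact hsum g s
    _ = _ := by rw [Real.rpow_add_one two_ne_zero]; ring

theorem schwartzNorm_conv_le [Group Γ] [NormedRing R] (hΞ : ∀ γ, 0 < Ξ γ)
    (hΞ_inv : ∀ γ, Ξ γ⁻¹ = Ξ γ) (hL : ∀ γ, 0 ≤ L γ) (hL_inv : ∀ γ, L γ⁻¹ = L γ)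
    (hL_mul : ∀ γ δ, L (γ * δ) ≤ L γ + L δ) (hp : 0 ≤ p) {C : ℝ}
    (hsum : ∀ (h : Γ) (t : Finset Γ), ∑ γ ∈ t, Ξ γ / (1 + L γ) ^ p * Ξ (γ⁻¹ * h) ≤ C * Ξ h)
    {f₁ f₂ : Γ → R} (hf₁ : f₁.support.Finite) (hf₂ : f₂.support.Finite) :
    schwartzNorm Ξ L p (fun g => ∑' γ, f₁ γ * f₂ (γ⁻¹ * g))
      ≤ 2 ^ (p + 1) * C * (schwartzNorm Ξ L p f₁ * schwartzNorm Ξ L p f₂) := by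
  have : Nonempty Γ := ⟨1⟩
  refine ciSup_le fun g => ?_
  rw [div_le_iff₀ (hΞ g)]
  exact norm_conv_mul_rpow_le hΞ hΞ_inv hL hL_inv hL_mul hp hsum hf₁ hf₂ g

end SchwartzNorm

theorem harish_chandra_schwartz_submultiplicative_general
    {Γ : Type*} [Group Γ]
    {X : Type*} [MeasurableSpace X] [MulAction Γ X]
    (ν : Measure X) [IsProbabilityMeasure ν]
    (hact : ∀ γ : Γ, Measurable (fun x : X => γ • x))
    (c : Γ → X → ℝ)
    (hc_meas : ∀ γ : Γ, Measurable (c γ))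
    (hc_pos : ∀ γ : Γ, ∀ᵐ x ∂ν, 0 < c γ x)
    (hc : ∀ γ : Γ, Measure.map (fun x : X => γ • x) ν
        = ν.withDensity (fun x => ENNReal.ofReal (c γ x)))
    (Ξ : Γ → ℝ) (hΞ : ∀ γ : Γ, Ξ γ = ∫ x, Real.sqrt (c γ x) ∂ν)
    (L : Γ → ℝ) (hL_nonneg : ∀ γ, 0 ≤ L γ)
    (hL_inv : ∀ γ, L γ⁻¹ = L γ) (hL_sub : ∀ γ δ : Γ, L (γ * δ) ≤ L γ + L δ)
    (d : ℝ) (hd : 0 < d) (C : ℝ) (hC : 0 < C)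
    (hstar : ∀ ξ : X → ℝ≥0∞, Measurable ξ →
      ∑' γ : Γ, ENNReal.ofReal (Ξ γ / (1 + L γ) ^ (2 * d))
          * ∫⁻ x, ENNReal.ofReal (Real.sqrt (c γ x)) * ξ x ∂ν
        ≤ ENNReal.ofReal C * ∫⁻ x, ξ x ∂ν)
    (S : (Γ → ℂ) → ℝ)
    (hS : ∀ f : Γ → ℂ, S f = ⨆ γ : Γ, ‖f γ‖ * (1 + L γ) ^ (2 * d) / Ξ γ)
    (f₁ f₂ : Γ → ℂ) (hf₁ : f₁.support.Finite) (hf₂ : f₂.support.Finite) :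
    S (fun g => ∑' γ : Γ, f₁ γ * f₂ (γ⁻¹ * g))
      ≤ (2 : ℝ) ^ (2 * d + 1) * C * (S f₁ * S f₂) := by
  have hcoc : IsRadonNikodymCocycle_s12 ν c := ⟨hact, hc_meas, hc_pos, hc⟩
  obtain rfl : Ξ = harishChandra ν c := funext hΞ
  obtain rfl : S = schwartzNorm (harishChandra ν c) L (2 * d) := funext hS
  have hw : ∀ γ, 0 ≤ harishChandra ν c γ / (1 + L γ) ^ (2 * d) := fun γ =>
    div_nonneg (harishChandra_nonneg ν c γ) (Real.rpow_nonneg (by linarith [hL_nonneg γ]) _)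
  exact schwartzNorm_conv_le hcoc.harishChandra_pos hcoc.harishChandra_inv hL_nonneg hL_inv
    hL_sub (by positivity) (hcoc.sum_mul_harishChandra_le _ hw hC.le hstar) hf₁ hf₂

/-- Abstract form of Theorem 1.2, Item (1): under hypothesis (★), the weighted norm
`‖f‖_{S^{2d}} = sup_γ |f(γ)|(1+L(γ))^{2d}/Ξ(γ)` is submultiplicative up to the
constant `2^{2d+1} C` for the convolution
`(f₁ * f₂)(g) = Σ_γ f₁(γ) f₂(γ⁻¹g)` of finitely supported functions. -/
theorem harish_chandra_schwartz_submultiplicative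
    {Γ : Type*} [Group Γ] [Countable Γ]
    {X : Type*} [MeasurableSpace X] [MulAction Γ X]
    (ν : Measure X) [IsProbabilityMeasure ν]
    (hact : ∀ γ : Γ, Measurable (fun x : X => γ • x))
    (c : Γ → X → ℝ)
    (hc_meas : ∀ γ : Γ, Measurable (c γ))
    (hc_pos : ∀ γ : Γ, ∀ᵐ x ∂ν, 0 < c γ x)
    (hc : ∀ γ : Γ, Measure.map (fun x : X => γ • x) ν
        = ν.withDensity (fun x => ENNReal.ofReal (c γ x)))
    (Ξ : Γ → ℝ) (hΞ : ∀ γ : Γ, Ξ γ = ∫ x, Real.sqrt (c γ x) ∂ν)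
    (L : Γ → ℝ) (hL_nonneg : ∀ γ, 0 ≤ L γ) (hL_one : L 1 = 0)
    (hL_inv : ∀ γ, L γ⁻¹ = L γ) (hL_sub : ∀ γ δ : Γ, L (γ * δ) ≤ L γ + L δ)
    (d : ℝ) (hd : 0 < d) (C : ℝ) (hC : 0 < C)
    (hstar : ∀ ξ : X → ℝ≥0∞, Measurable ξ →
      ∑' γ : Γ, ENNReal.ofReal (Ξ γ / (1 + L γ) ^ (2 * d))
          * ∫⁻ x, ENNReal.ofReal (Real.sqrt (c γ x)) * ξ x ∂ν
        ≤ ENNReal.ofReal C * ∫⁻ x, ξ x ∂ν)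
    (S : (Γ → ℂ) → ℝ)
    (hS : ∀ f : Γ → ℂ, S f = ⨆ γ : Γ, ‖f γ‖ * (1 + L γ) ^ (2 * d) / Ξ γ)
    (f₁ f₂ : Γ → ℂ) (hf₁ : f₁.support.Finite) (hf₂ : f₂.support.Finite) :
    S (fun g => ∑' γ : Γ, f₁ γ * f₂ (γ⁻¹ * g))
      ≤ (2 : ℝ) ^ (2 * d + 1) * C * (S f₁ * S f₂) :=
  harish_chandra_schwartz_submultiplicative_general ν hact c hc_meas hc_pos hc Ξ hΞ L hL_nonneg
    hL_inv hL_sub d hd C hC hstar S hS f₁ f₂ hf₁ hf₂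
end

section
/- For every finitely supported f: Γ → ℂ and all ξ, η ∈ L²(X, ν), the operator π_ν(f) := Σ_{γ∈Γ} f(γ) π_ν(γ) satisfies |⟨π_ν(f)ξ, η⟩| ≤ (Σ_{γ∈Γ} |f(γ)| ∫_X c(γ,x)^{1/2} |η(x)|² dν(x))^{1/2} · (Σ_{γ∈Γ} |f(γ)| ∫_X c(γ⁻¹,x)^{1/2} |ξ(x)|² dν(x))^{1/2}, where the right-hand side is an extended nonnegative real number. -/
/-!
Expanding the sum, `|⟨π(f)ξ, η⟩| ≤ Σ_γ |f γ| |⟨π(γ)ξ, η⟩|`. Each term is bounded by Cauchy–Schwarz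
for the weight `c(γ,·)^{1/2}`, which gives `∫ c(γ,x)^{1/2} |ξ(γ⁻¹x)|² dν(x)` as the second factor;
the substitution `x = γy` turns it into `∫ c(γ⁻¹,y)^{1/2} |ξ(y)|² dν(y)` thanks to the cocycle
identity `c(γ⁻¹,y) c(γ,γy) = 1` for a.e. `y`, which follows from `γ⁻¹_*γ_*ν = ν` by uniqueness of
densities. A weighted Cauchy–Schwarz over `γ` finishes.
-/

open MeasureTheory ENNReal

section DensityCocycle

variable {α : Type*} [MeasurableSpace α] {ν : Measure α} {e : α ≃ᵐ α} {w v : α → ℝ≥0∞}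

theorem ae_density_symm_mul_density_comp_eq_one [SigmaFinite ν]
    (hw : Measurable w) (hv : Measurable v)
    (he : ν.map e = ν.withDensity w) (he_symm : ν.map e.symm = ν.withDensity v) :
    ∀ᵐ x ∂ν, v x * w (e x) = 1 := by
  have hwe : Measurable (w ∘ e) := hw.comp e.measurable
  have h : ν.withDensity (v * w ∘ e) = ν.withDensity 1 := by
    rw [withDensity_one]
    refine Measure.ext_of_lintegral _ fun g hg => ?_
    calc ∫⁻ y, g y ∂ν.withDensity (v * w ∘ e)
        = ∫⁻ y, (w ∘ e * g) y ∂ν.withDensity v := by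
          rw [lintegral_withDensity_eq_lintegral_mul _ (hv.mul hwe) hg,
            lintegral_withDensity_eq_lintegral_mul _ hv (hwe.mul hg), mul_assoc]
      _ = ∫⁻ x, (w * g ∘ e.symm) x ∂ν := by
          rw [← he_symm, lintegral_map_equiv]
          simp only [Pi.mul_apply, Function.comp_apply, MeasurableEquiv.apply_symm_apply]
      _ = ∫⁻ y, g y ∂ν := by
          rw [← lintegral_withDensity_eq_lintegral_mul _ hw (hg.comp e.symm.measurable),
            ← he, lintegral_map_equiv]
          simp only [Function.comp_apply, MeasurableEquiv.symm_apply_apply]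
  exact (withDensity_eq_iff_of_sigmaFinite (hv.mul hwe).aemeasurable aemeasurable_const).mp h

theorem lintegral_density_rpow_mul_comp_symm [SigmaFinite ν]
    (hw : Measurable w) (hv : Measurable v)
    (he : ν.map e = ν.withDensity w) (he_symm : ν.map e.symm = ν.withDensity v)
    {p : ℝ} (hp₀ : 0 ≤ p) (hp₁ : p ≤ 1) {G : α → ℝ≥0∞} (hG : Measurable G) :
    ∫⁻ x, w x ^ p * G (e.symm x) ∂ν = ∫⁻ y, v y ^ (1 - p) * G y ∂ν := by
  have hmeas : Measurable fun y => w (e y) ^ p * G y :=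
    ((hw.comp e.measurable).pow_const p).mul hG
  calc ∫⁻ x, w x ^ p * G (e.symm x) ∂ν
      = ∫⁻ y, w (e y) ^ p * G y ∂ν.map e.symm := by
        rw [lintegral_map_equiv]
        simp only [MeasurableEquiv.apply_symm_apply]
    _ = ∫⁻ y, v y * (w (e y) ^ p * G y) ∂ν := by
        rw [he_symm, lintegral_withDensity_eq_lintegral_mul _ hv hmeas]
        rfl
    _ = ∫⁻ y, v y ^ (1 - p) * G y ∂ν := by
        refine lintegral_congr_ae ?_
        filter_upwards [ae_density_symm_mul_density_comp_eq_one hw hv he he_symm] with y hy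
        have hv_split : v y = v y ^ (1 - p) * v y ^ p := by
          rw [← ENNReal.rpow_add_of_nonneg _ _ (sub_nonneg.mpr hp₁) hp₀, sub_add_cancel,
            ENNReal.rpow_one]
        calc v y * (w (e y) ^ p * G y)
            = v y ^ (1 - p) * (v y * w (e y)) ^ p * G y := by
              rw [ENNReal.mul_rpow_of_nonneg _ _ hp₀]
              nth_rewrite 1 [hv_split]
              ring
          _ = v y ^ (1 - p) * G y := by rw [hy, ENNReal.one_rpow, mul_one]

end DensityCocycle

namespace ENNReal

theorem rpow_half_pow_two (x : ℝ≥0∞) : (x ^ (1 / 2 : ℝ)) ^ 2 = x := by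
  rw [← rpow_natCast, ← rpow_mul]
  norm_num

theorem ofReal_sqrt_eq_rpow_half (t : ℝ) : ENNReal.ofReal √t = ENNReal.ofReal t ^ (1 / 2 : ℝ) := by
  rcases le_total 0 t with ht | ht
  · rw [Real.sqrt_eq_rpow, ofReal_rpow_of_nonneg ht (by norm_num)]
  · rw [Real.sqrt_eq_zero'.mpr ht, ofReal_of_nonpos ht, ofReal_zero, zero_rpow_of_pos (by norm_num)]

theorem rpow_half_mul_pow_two (k x : ℝ≥0∞) : (k ^ (1 / 2 : ℝ) * x) ^ (2 : ℝ) = k * x ^ 2 := by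
  rw [rpow_two, mul_pow, rpow_half_pow_two]

theorem sum_weighted_mul_le {ι : Type*} (s : Finset ι) (k f g : ι → ℝ≥0∞) :
    ∑ i ∈ s, k i * (f i * g i)
      ≤ (∑ i ∈ s, k i * f i ^ 2) ^ (1 / 2 : ℝ) * (∑ i ∈ s, k i * g i ^ 2) ^ (1 / 2 : ℝ) := by
  have h := inner_le_Lp_mul_Lq s (fun i => k i ^ (1 / 2 : ℝ) * f i)
    (fun i => k i ^ (1 / 2 : ℝ) * g i) Real.HolderConjugate.two_two
  simp only [rpow_half_mul_pow_two] at h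
  convert h using 2 with i
  rw [mul_mul_mul_comm, ← pow_two, rpow_half_pow_two]

theorem lintegral_weighted_mul_le {α : Type*} [MeasurableSpace α] (μ : Measure α)
    {k f g : α → ℝ≥0∞} (hk : AEMeasurable k μ) (hf : AEMeasurable f μ) (hg : AEMeasurable g μ) :
    ∫⁻ x, k x * (f x * g x) ∂μ
      ≤ (∫⁻ x, k x * f x ^ 2 ∂μ) ^ (1 / 2 : ℝ) * (∫⁻ x, k x * g x ^ 2 ∂μ) ^ (1 / 2 : ℝ) := by
  have h := lintegral_mul_le_Lp_mul_Lq μ Real.HolderConjugate.two_two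
    ((hk.pow_const (1 / 2 : ℝ)).mul hf) ((hk.pow_const (1 / 2 : ℝ)).mul hg)
  simp only [Pi.mul_apply, rpow_half_mul_pow_two] at h
  convert h using 3 with x
  rw [mul_mul_mul_comm, ← pow_two, rpow_half_pow_two]

end ENNReal

theorem enorm_inner_sum_smul_apply_le {𝕜 E ι : Type*} [RCLike 𝕜] [NormedAddCommGroup E]
    [InnerProductSpace 𝕜 E] (s : Finset ι) (a : ι → 𝕜) (T : ι → E →L[𝕜] E) (x y : E) :
    ‖inner 𝕜 ((∑ i ∈ s, a i • T i) x) y‖ₑ ≤ ∑ i ∈ s, ‖a i‖ₑ * ‖inner 𝕜 (T i x) y‖ₑ := by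
  rw [sum_apply, sum_inner]
  refine (enorm_sum_le _ _).trans_eq (Finset.sum_congr rfl fun i _ => ?_)
  rw [smul_apply, inner_smul_left, enorm_mul, RCLike.enorm_conj]

theorem enorm_inner_le_of_ae_eq_sqrt_density_mul_comp_symm {α : Type*} [MeasurableSpace α]
    {ν : Measure α} [SigmaFinite ν] {e : α ≃ᵐ α} {c c' : α → ℝ}
    (hc : Measurable c) (hc' : Measurable c')
    (he : ν.map e = ν.withDensity fun x => ENNReal.ofReal (c x))
    (he_symm : ν.map e.symm = ν.withDensity fun x => ENNReal.ofReal (c' x))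
    {φ ξ η : Lp ℂ 2 ν} (hφ : ⇑φ =ᵐ[ν] fun x => (√(c x) : ℂ) * ξ (e.symm x)) :
    ‖inner ℂ φ η‖ₑ
      ≤ (∫⁻ x, ENNReal.ofReal √(c x) * ‖η x‖ₑ ^ 2 ∂ν) ^ (1 / 2 : ℝ)
        * (∫⁻ x, ENNReal.ofReal √(c' x) * ‖ξ x‖ₑ ^ 2 ∂ν) ^ (1 / 2 : ℝ) := by
  have hξ : Measurable fun x => ‖ξ x‖ₑ := (Lp.stronglyMeasurable ξ).measurable.enorm
  have hη : Measurable fun x => ‖η x‖ₑ := (Lp.stronglyMeasurable η).measurable.enorm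
  have hsqrt_c : Measurable fun x => ENNReal.ofReal √(c x) := hc.sqrt.ennreal_ofReal
  have hchange : ∫⁻ x, ENNReal.ofReal √(c x) * ‖ξ (e.symm x)‖ₑ ^ 2 ∂ν
      = ∫⁻ x, ENNReal.ofReal √(c' x) * ‖ξ x‖ₑ ^ 2 ∂ν := by
    have h := lintegral_density_rpow_mul_comp_symm hc.ennreal_ofReal hc'.ennreal_ofReal he he_symm
      (p := 1 / 2) (by norm_num) (by norm_num) (hξ.pow_const 2)
    norm_num only at h
    simpa only [ENNReal.ofReal_sqrt_eq_rpow_half, one_div] using h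
  calc ‖inner ℂ φ η‖ₑ ≤ ∫⁻ x, ‖inner ℂ (φ x) (η x)‖ₑ ∂ν := by
        rw [L2.inner_def]
        exact enorm_integral_le_lintegral_enorm _
    _ = ∫⁻ x, ENNReal.ofReal √(c x) * (‖η x‖ₑ * ‖ξ (e.symm x)‖ₑ) ∂ν := by
        refine lintegral_congr_ae (hφ.mono fun x hx => ?_)
        dsimp only at hx ⊢
        rw [hx, RCLike.inner_apply, enorm_mul, RCLike.enorm_conj, enorm_mul,
          ← ofReal_norm (√(c x) : ℂ), Complex.norm_real, Real.norm_of_nonneg (Real.sqrt_nonneg _)]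
        ring
    _ ≤ _ := ENNReal.lintegral_weighted_mul_le ν hsqrt_c.aemeasurable hη.aemeasurable
          (hξ.comp e.symm.measurable).aemeasurable
    _ = _ := by rw [hchange]

theorem convolution_operator_inner_product_bound_general
    {Γ : Type*} [Group Γ]
    {X : Type*} [MeasurableSpace X] [MulAction Γ X]
    (ν : Measure X) [IsProbabilityMeasure ν]
    (hact : ∀ γ : Γ, Measurable (fun x : X => γ • x))
    (c : Γ → X → ℝ)
    (hc_meas : ∀ γ : Γ, Measurable (c γ))
    (hc : ∀ γ : Γ, Measure.map (fun x : X => γ • x) ν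
        = ν.withDensity (fun x => ENNReal.ofReal (c γ x)))
    (π : Γ → (Lp ℂ 2 ν →L[ℂ] Lp ℂ 2 ν))
    (hπ : ∀ (γ : Γ) (ξ : Lp ℂ 2 ν),
      (π γ ξ : X → ℂ) =ᵐ[ν]
        fun x => (Real.sqrt (c γ x) : ℂ) * (ξ : X → ℂ) (γ⁻¹ • x))
    (f : Γ → ℂ) (hf : f.support.Finite) (ξ η : Lp ℂ 2 ν) :
    ENNReal.ofReal ‖(inner ℂ ((∑ γ ∈ hf.toFinset, f γ • π γ) ξ) η : ℂ)‖
      ≤ (∑' γ : Γ, ENNReal.ofReal ‖f γ‖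
            * ∫⁻ x, ENNReal.ofReal (Real.sqrt (c γ x))
                * ENNReal.ofReal (‖(η : X → ℂ) x‖ ^ 2) ∂ν) ^ (1 / 2 : ℝ)
        * (∑' γ : Γ, ENNReal.ofReal ‖f γ‖
            * ∫⁻ x, ENNReal.ofReal (Real.sqrt (c γ⁻¹ x))
                * ENNReal.ofReal (‖(ξ : X → ℂ) x‖ ^ 2) ∂ν) ^ (1 / 2 : ℝ) := by
  have : MeasurableConstSMul Γ X := ⟨hact⟩
  simp only [ofReal_norm, ENNReal.ofReal_pow (norm_nonneg _)]
  set A : Γ → ℝ≥0∞ := fun γ => ∫⁻ x, ENNReal.ofReal √(c γ x) * ‖η x‖ₑ ^ 2 ∂ν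
  set B : Γ → ℝ≥0∞ := fun γ => ∫⁻ x, ENNReal.ofReal √(c γ⁻¹ x) * ‖ξ x‖ₑ ^ 2 ∂ν
  have hπ_bound (γ : Γ) : ‖inner ℂ (π γ ξ) η‖ₑ ≤ A γ ^ (1 / 2 : ℝ) * B γ ^ (1 / 2 : ℝ) :=
    enorm_inner_le_of_ae_eq_sqrt_density_mul_comp_symm (e := MeasurableEquiv.smul γ)
      (hc_meas γ) (hc_meas γ⁻¹) (hc γ) (hc γ⁻¹) (hπ γ ξ)
  calc ‖inner ℂ ((∑ γ ∈ hf.toFinset, f γ • π γ) ξ) η‖ₑ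
      ≤ ∑ γ ∈ hf.toFinset, ‖f γ‖ₑ * ‖inner ℂ (π γ ξ) η‖ₑ := enorm_inner_sum_smul_apply_le _ _ _ _ _
    _ ≤ ∑ γ ∈ hf.toFinset, ‖f γ‖ₑ * (A γ ^ (1 / 2 : ℝ) * B γ ^ (1 / 2 : ℝ)) := by
        gcongr with γ
        exact hπ_bound γ
    _ ≤ (∑ γ ∈ hf.toFinset, ‖f γ‖ₑ * A γ) ^ (1 / 2 : ℝ)
          * (∑ γ ∈ hf.toFinset, ‖f γ‖ₑ * B γ) ^ (1 / 2 : ℝ) := by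
        simpa only [ENNReal.rpow_half_pow_two] using ENNReal.sum_weighted_mul_le hf.toFinset (‖f ·‖ₑ)
          (A · ^ (1 / 2 : ℝ)) (B · ^ (1 / 2 : ℝ))
    _ ≤ (∑' γ, ‖f γ‖ₑ * A γ) ^ (1 / 2 : ℝ) * (∑' γ, ‖f γ‖ₑ * B γ) ^ (1 / 2 : ℝ) := by
        gcongr <;> exact ENNReal.sum_le_tsum _

/-- For every finitely supported `f : Γ → ℂ` and `ξ, η ∈ L²(X, ν)`, the operator
`π_ν(f) = Σ_γ f(γ) π_ν(γ)` satisfies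
`|⟨π_ν(f)ξ, η⟩| ≤ (Σ_γ |f(γ)| ∫ c(γ,x)^{1/2}|η|² dν)^{1/2}
               · (Σ_γ |f(γ)| ∫ c(γ⁻¹,x)^{1/2}|ξ|² dν)^{1/2}`,
the right-hand side being an extended nonnegative real number. -/
theorem convolution_operator_inner_product_bound
    {Γ : Type*} [Group Γ] [Countable Γ]
    {X : Type*} [MeasurableSpace X] [MulAction Γ X]
    (ν : Measure X) [IsProbabilityMeasure ν]
    (hact : ∀ γ : Γ, Measurable (fun x : X => γ • x))
    (c : Γ → X → ℝ)
    (hc_meas : ∀ γ : Γ, Measurable (c γ))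
    (hc_pos : ∀ γ : Γ, ∀ᵐ x ∂ν, 0 < c γ x)
    (hc : ∀ γ : Γ, Measure.map (fun x : X => γ • x) ν
        = ν.withDensity (fun x => ENNReal.ofReal (c γ x)))
    (π : Γ → (Lp ℂ 2 ν →L[ℂ] Lp ℂ 2 ν))
    (hπ : ∀ (γ : Γ) (ξ : Lp ℂ 2 ν),
      (π γ ξ : X → ℂ) =ᵐ[ν]
        fun x => (Real.sqrt (c γ x) : ℂ) * (ξ : X → ℂ) (γ⁻¹ • x))
    (f : Γ → ℂ) (hf : f.support.Finite) (ξ η : Lp ℂ 2 ν) :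
    ENNReal.ofReal ‖(inner ℂ ((∑ γ ∈ hf.toFinset, f γ • π γ) ξ) η : ℂ)‖
      ≤ (∑' γ : Γ, ENNReal.ofReal ‖f γ‖
            * ∫⁻ x, ENNReal.ofReal (Real.sqrt (c γ x))
                * ENNReal.ofReal (‖(η : X → ℂ) x‖ ^ 2) ∂ν) ^ (1 / 2 : ℝ)
        * (∑' γ : Γ, ENNReal.ofReal ‖f γ‖
            * ∫⁻ x, ENNReal.ofReal (Real.sqrt (c γ⁻¹ x))
                * ENNReal.ofReal (‖(ξ : X → ℂ) x‖ ^ 2) ∂ν) ^ (1 / 2 : ℝ) :=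
  convolution_operator_inner_product_bound_general ν hact c hc_meas hc π hπ f hf ξ η
end

section
/- (Abstract form of Theorem 1.2, Item (2), boundary representation version.) Assume hypothesis (★). Then for every finitely supported f: Γ → ℂ, the operator π_ν(f) := Σ_{γ∈Γ} f(γ) π_ν(γ) on L²(X, ν) satisfies ‖π_ν(f)‖_{op} ≤ C · ‖f‖_{S^{2d}}. -/
open MeasureTheory ENNReal
open scoped InnerProductSpace

/-!
Put `w γ = Ξ(γ) / (1 + L γ)^{2d}`, so that `|f γ| ≤ ‖f‖_{S^{2d}} w γ`. For `ξ, η ∈ L²` with moduli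
`u, v`, the coefficient `⟨π_ν(γ) ξ, η⟩` is at most `∫ c(γ,x)^{1/2} u(γ⁻¹x) v(x) dν`, and we split
`2 u(γ⁻¹x) v(x) ≤ u(γ⁻¹x)² + v(x)²`. Substituting `x ↦ γx` and using the cocycle identity
`c(γ⁻¹,x) c(γ,γx) = 1` turns `∫ c(γ,x)^{1/2} u(γ⁻¹x)² dν` into `∫ c(γ⁻¹,x)^{1/2} u(x)² dν`; since
`w(γ⁻¹) = w(γ)`, hypothesis (★) bounds the two resulting sums by `C ‖u‖²` and `C ‖v‖²`. Hence
`2 |⟨π_ν(f) ξ, η⟩| ≤ C ‖f‖_{S^{2d}} (‖ξ‖² + ‖η‖²)`, and testing against `η = π_ν(f) ξ / ‖π_ν(f) ξ‖`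
for unit `ξ` bounds the operator norm.
-/

theorem ENNReal.two_mul_le_add_sq (a b : ℝ≥0∞) : 2 * a * b ≤ a ^ 2 + b ^ 2 := by
  rcases eq_or_ne a ⊤ with rfl | ha
  · rcases eq_or_ne b 0 with rfl | hb <;> simp [*]
  rcases eq_or_ne b ⊤ with rfl | hb
  · simp [*]
  lift a to NNReal using ha
  lift b to NNReal using hb
  exact_mod_cast _root_.two_mul_le_add_sq a b

theorem ENNReal.ofReal_mul_ofReal_sqrt_of_ofReal_mul_eq_one {a b : ℝ}
    (h : ENNReal.ofReal a * ENNReal.ofReal b = 1) :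
    ENNReal.ofReal a * ENNReal.ofReal √b = ENNReal.ofReal √a := by
  have ha : 0 < a := by
    by_contra! ha
    simp [ENNReal.ofReal_of_nonpos ha] at h
  rw [← ENNReal.ofReal_mul ha.le, ENNReal.ofReal_eq_one] at h
  rw [← ENNReal.ofReal_mul ha.le, eq_inv_of_mul_eq_one_right h, Real.sqrt_inv,
    ← div_eq_mul_inv, Real.div_sqrt]

theorem ENNReal.ofReal_sqrt_le_one_add (a : ℝ) : ENNReal.ofReal √a ≤ 1 + ENNReal.ofReal a := by
  rcases le_or_gt a 0 with ha | ha
  · simp [Real.sqrt_eq_zero_of_nonpos ha]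
  · rw [← ENNReal.ofReal_one, ← ENNReal.ofReal_add zero_le_one ha.le]
    exact ENNReal.ofReal_le_ofReal (by nlinarith [Real.sq_sqrt ha.le, sq_nonneg (√a - 1)])

theorem MeasureTheory.Lp.enorm_sq_eq_lintegral {X E : Type*} [MeasurableSpace X] {μ : Measure X}
    [NormedAddCommGroup E] (ξ : Lp E 2 μ) : ‖ξ‖ₑ ^ 2 = ∫⁻ x, ‖ξ x‖ₑ ^ 2 ∂μ := by
  simpa [Lp.enorm_def] using eLpNorm_nnreal_pow_eq_lintegral (f := ξ) (μ := μ) (p := 2) two_ne_zero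

theorem MeasureTheory.L2.enorm_inner_le_lintegral {X 𝕜 E : Type*} [MeasurableSpace X]
    {μ : Measure X} [RCLike 𝕜] [NormedAddCommGroup E] [InnerProductSpace 𝕜 E] (ξ η : Lp E 2 μ) :
    ‖⟪ξ, η⟫_𝕜‖ₑ ≤ ∫⁻ x, ‖ξ x‖ₑ * ‖η x‖ₑ ∂μ := by
  rw [L2.inner_def]
  refine (enorm_integral_le_lintegral_enorm _).trans (lintegral_mono fun x => ?_)
  simpa only [enorm_eq_nnnorm, ← ENNReal.coe_mul, ENNReal.coe_le_coe] using
    nnnorm_inner_le_nnnorm (𝕜 := 𝕜) (ξ x) (η x)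

theorem ContinuousLinearMap.opNorm_le_of_two_mul_enorm_inner_le {𝕜 E F : Type*} [RCLike 𝕜]
    [NormedAddCommGroup E] [InnerProductSpace 𝕜 E] [NormedAddCommGroup F] [InnerProductSpace 𝕜 F]
    (T : E →L[𝕜] F) {M : ℝ} (hM : 0 ≤ M)
    (h : ∀ x y, 2 * ‖⟪T x, y⟫_𝕜‖ₑ ≤ ENNReal.ofReal M * (‖x‖ₑ ^ 2 + ‖y‖ₑ ^ 2)) : ‖T‖ ≤ M := by
  refine opNorm_le_of_unit_norm hM fun x hx => ?_
  rcases eq_or_ne (T x) 0 with h0 | h0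
  · simpa [h0] using hM
  have hTx : ‖T x‖ ≠ 0 := norm_ne_zero_iff.2 h0
  set y := (‖T x‖⁻¹ : 𝕜) • T x
  have hy : ‖y‖ₑ = 1 := by
    rw [← ofReal_norm, norm_smul, norm_inv, RCLike.norm_ofReal, abs_norm, inv_mul_cancel₀ hTx,
      ENNReal.ofReal_one]
  have hxy : ‖⟪T x, y⟫_𝕜‖ₑ = ENNReal.ofReal ‖T x‖ := by
    rw [← ofReal_norm, inner_smul_right, inner_self_eq_norm_sq_to_K, norm_mul, norm_inv,
      RCLike.norm_ofReal, abs_norm, norm_pow, RCLike.norm_ofReal, abs_norm, sq,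
      inv_mul_cancel_left₀ hTx]
  have := h x y
  rw [hxy, hy, ← ofReal_norm, hx, ENNReal.ofReal_one, one_pow, one_add_one_eq_two, mul_comm _ 2,
    ENNReal.mul_le_mul_iff_right two_ne_zero ENNReal.ofNat_ne_top] at this
  exact (ENNReal.ofReal_le_ofReal_iff hM).1 this

theorem enorm_le_ofReal_iSup_mul_div {ι E : Type*} [NormedAddCommGroup E] {f : ι → E}
    (hf : f.support.Finite) {a b : ι → ℝ} (ha : ∀ i, 0 < a i) (hb : ∀ i, 0 < b i) (i : ι) :
    ‖f i‖ₑ ≤ ENNReal.ofReal (⨆ j, ‖f j‖ * a j / b j) * ENNReal.ofReal (b i / a i) := by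
  have hbdd : BddAbove (Set.range fun j => ‖f j‖ * a j / b j) := by
    refine ((hf.image fun j => ‖f j‖ * a j / b j).insert 0).bddAbove.mono ?_
    rintro _ ⟨j, rfl⟩
    by_cases hj : f j = 0
    · simp [hj]
    · exact Or.inr ⟨j, hj, rfl⟩
  rw [← ofReal_norm, ← ENNReal.ofReal_mul' (div_pos (hb i) (ha i)).le]
  refine ENNReal.ofReal_le_ofReal ?_
  rw [mul_div_assoc', le_div_iff₀ (ha i)]
  exact (div_le_iff₀ (hb i)).1 (le_ciSup hbdd i)

structure IsRadonNikodymCocycle_s14 {Γ X : Type*} [Group Γ] [MulAction Γ X] [MeasurableSpace X]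
    (ν : Measure X) (c : Γ → X → ℝ) : Prop where
  measurable_const_smul : ∀ γ : Γ, Measurable (fun x : X => γ • x)
  measurable_density : ∀ γ : Γ, Measurable (c γ)
  map_smul_eq_withDensity : ∀ γ : Γ,
    Measure.map (fun x : X => γ • x) ν = ν.withDensity (fun x => ENNReal.ofReal (c γ x))

namespace IsRadonNikodymCocycle_s14

variable {Γ X : Type*} [Group Γ] [MulAction Γ X] [MeasurableSpace X] {ν : Measure X}
  {c : Γ → X → ℝ}

theorem lintegral_comp_smul (h : IsRadonNikodymCocycle_s14 ν c) (γ : Γ) {g : X → ℝ≥0∞}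
    (hg : Measurable g) : ∫⁻ x, g (γ • x) ∂ν = ∫⁻ x, ENNReal.ofReal (c γ x) * g x ∂ν := by
  rw [← lintegral_map hg (h.measurable_const_smul γ), h.map_smul_eq_withDensity,
    lintegral_withDensity_eq_lintegral_mul _ (h.measurable_density γ).ennreal_ofReal hg]
  rfl

theorem quasiMeasurePreserving_smul_s14 (h : IsRadonNikodymCocycle_s14 ν c) (γ : Γ) :
    Measure.QuasiMeasurePreserving (fun x : X => γ • x) ν ν :=
  ⟨h.measurable_const_smul γ, h.map_smul_eq_withDensity γ ▸ withDensity_absolutelyContinuous _ _⟩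

theorem lintegral_density (h : IsRadonNikodymCocycle_s14 ν c) (γ : Γ) :
    ∫⁻ x, ENNReal.ofReal (c γ x) ∂ν = ν Set.univ := by
  simpa using (h.lintegral_comp_smul γ (measurable_const (a := (1 : ℝ≥0∞)))).symm

theorem density_inv_mul_density_smul [SigmaFinite ν] (h : IsRadonNikodymCocycle_s14 ν c) (γ : Γ) :
    ∀ᵐ x ∂ν, ENNReal.ofReal (c γ⁻¹ x) * ENNReal.ofReal (c γ (γ • x)) = 1 := by
  have hmeas : ∀ γ, Measurable fun x => ENNReal.ofReal (c γ x) :=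
    fun γ => (h.measurable_density γ).ennreal_ofReal
  have key : ∀ g : X → ℝ≥0∞, Measurable g →
      ∫⁻ x, ENNReal.ofReal (c γ⁻¹ x) * (ENNReal.ofReal (c γ (γ • x)) * g x) ∂ν = ∫⁻ x, g x ∂ν := by
    intro g hg
    have hF : Measurable fun x => ENNReal.ofReal (c γ (γ • x)) * g x :=
      ((hmeas γ).comp (h.measurable_const_smul γ)).mul hg
    have hg' : Measurable fun x => g (γ⁻¹ • x) := hg.comp (h.measurable_const_smul γ⁻¹)
    rw [← h.lintegral_comp_smul γ⁻¹ hF]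
    simp only [smul_inv_smul]
    rw [← h.lintegral_comp_smul γ hg']
    simp only [inv_smul_smul]
  have hF : Measurable fun x => ENNReal.ofReal (c γ⁻¹ x) * ENNReal.ofReal (c γ (γ • x)) :=
    (hmeas γ⁻¹).mul ((hmeas γ).comp (h.measurable_const_smul γ))
  refine ae_eq_of_forall_setLIntegral_eq_of_sigmaFinite hF measurable_const fun s hs _ => ?_
  rw [← lintegral_indicator hs, ← lintegral_indicator hs]
  convert key (s.indicator fun _ => 1) (measurable_const.indicator hs) using 1
  congr with x
  by_cases hx : x ∈ s <;> simp [hx]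

theorem lintegral_sqrt_density_mul_comp_inv_smul [SigmaFinite ν] (h : IsRadonNikodymCocycle_s14 ν c)
    (γ : Γ) {g : X → ℝ≥0∞} (hg : Measurable g) :
    ∫⁻ x, ENNReal.ofReal √(c γ x) * g (γ⁻¹ • x) ∂ν
      = ∫⁻ x, ENNReal.ofReal √(c γ⁻¹ x) * g x ∂ν := by
  have hF : Measurable fun x => ENNReal.ofReal √(c γ (γ • x)) * g x :=
    ((h.measurable_density γ).comp (h.measurable_const_smul γ)).sqrt.ennreal_ofReal.mul hg
  have := h.lintegral_comp_smul γ⁻¹ hF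
  simp only [smul_inv_smul] at this
  rw [this]
  refine lintegral_congr_ae ?_
  filter_upwards [h.density_inv_mul_density_smul γ] with x hx
  rw [← mul_assoc, ENNReal.ofReal_mul_ofReal_sqrt_of_ofReal_mul_eq_one hx]

theorem integral_sqrt_density_eq_toReal (h : IsRadonNikodymCocycle_s14 ν c) (γ : Γ) :
    ∫ x, √(c γ x) ∂ν = (∫⁻ x, ENNReal.ofReal √(c γ x) ∂ν).toReal :=
  integral_eq_lintegral_of_nonneg_ae (ae_of_all _ fun _ => Real.sqrt_nonneg _)
    (h.measurable_density γ).sqrt.aestronglyMeasurable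

theorem integral_sqrt_density_inv [SigmaFinite ν] (h : IsRadonNikodymCocycle_s14 ν c) (γ : Γ) :
    ∫ x, √(c γ⁻¹ x) ∂ν = ∫ x, √(c γ x) ∂ν := by
  have := h.lintegral_sqrt_density_mul_comp_inv_smul γ⁻¹ (measurable_const (a := (1 : ℝ≥0∞)))
  simp only [mul_one, inv_inv] at this
  rw [h.integral_sqrt_density_eq_toReal, h.integral_sqrt_density_eq_toReal, this]

theorem integral_sqrt_density_pos [IsFiniteMeasure ν] [NeZero ν] (h : IsRadonNikodymCocycle_s14 ν c)
    (γ : Γ) : 0 < ∫ x, √(c γ x) ∂ν := by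
  rw [h.integral_sqrt_density_eq_toReal]
  have hfin : ∫⁻ x, ENNReal.ofReal √(c γ x) ∂ν ≠ ⊤ := by
    refine ne_top_of_le_ne_top (b := ∫⁻ x, (1 + ENNReal.ofReal (c γ x)) ∂ν) ?_
      (lintegral_mono fun x => ENNReal.ofReal_sqrt_le_one_add _)
    rw [lintegral_add_left measurable_const, h.lintegral_density]
    simp
  refine ENNReal.toReal_pos (fun h0 => ?_) hfin
  have hc0 : ∫⁻ x, ENNReal.ofReal (c γ x) ∂ν = 0 := by
    refine lintegral_eq_zero_of_ae_eq_zero ?_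
    filter_upwards [(lintegral_eq_zero_iff (h.measurable_density γ).sqrt.ennreal_ofReal).1 h0]
      with x hx
    have hx : √(c γ x) ≤ 0 := ENNReal.ofReal_eq_zero.1 hx
    exact ENNReal.ofReal_of_nonpos (Real.sqrt_eq_zero'.1 (hx.antisymm (Real.sqrt_nonneg _)))
  rw [h.lintegral_density] at hc0
  exact NeZero.ne ν (Measure.measure_univ_eq_zero.1 hc0)

theorem two_mul_tsum_lintegral_le [SigmaFinite ν] (h : IsRadonNikodymCocycle_s14 ν c)
    {K : Γ → ℝ≥0∞} (hK : ∀ γ, K γ⁻¹ = K γ) {A : ℝ≥0∞}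
    (hA : ∀ ξ : X → ℝ≥0∞, Measurable ξ →
      ∑' γ, K γ * ∫⁻ x, ENNReal.ofReal √(c γ x) * ξ x ∂ν ≤ A * ∫⁻ x, ξ x ∂ν)
    {u v : X → ℝ≥0∞} (hu : Measurable u) (hv : Measurable v) :
    2 * ∑' γ, K γ * ∫⁻ x, ENNReal.ofReal √(c γ x) * (u (γ⁻¹ • x) * v x) ∂ν
      ≤ A * (∫⁻ x, u x ^ 2 ∂ν + ∫⁻ x, v x ^ 2 ∂ν) := by
  have hsqrt : ∀ γ, Measurable fun x => ENNReal.ofReal √(c γ x) :=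
    fun γ => (h.measurable_density γ).sqrt.ennreal_ofReal
  have hu_comp : ∀ γ : Γ, Measurable fun x => u (γ⁻¹ • x) :=
    fun γ => hu.comp (h.measurable_const_smul γ⁻¹)
  have hu_sum : ∑' γ, K γ * ∫⁻ x, ENNReal.ofReal √(c γ x) * u (γ⁻¹ • x) ^ 2 ∂ν
      ≤ A * ∫⁻ x, u x ^ 2 ∂ν :=
    calc ∑' γ, K γ * ∫⁻ x, ENNReal.ofReal √(c γ x) * u (γ⁻¹ • x) ^ 2 ∂ν
        = ∑' γ, K γ⁻¹ * ∫⁻ x, ENNReal.ofReal √(c γ⁻¹ x) * u x ^ 2 ∂ν := by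
          simp_rw [hK, h.lintegral_sqrt_density_mul_comp_inv_smul _ (hu.pow_const 2)]
      _ = ∑' γ, K γ * ∫⁻ x, ENNReal.ofReal √(c γ x) * u x ^ 2 ∂ν :=
          (Equiv.inv Γ).tsum_eq fun γ => K γ * ∫⁻ x, ENNReal.ofReal √(c γ x) * u x ^ 2 ∂ν
      _ ≤ A * ∫⁻ x, u x ^ 2 ∂ν := hA _ (hu.pow_const 2)
  have hpoint : ∀ γ, 2 * ∫⁻ x, ENNReal.ofReal √(c γ x) * (u (γ⁻¹ • x) * v x) ∂ν
      ≤ ∫⁻ x, ENNReal.ofReal √(c γ x) * u (γ⁻¹ • x) ^ 2 ∂ν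
        + ∫⁻ x, ENNReal.ofReal √(c γ x) * v x ^ 2 ∂ν := fun γ => by
    rw [← lintegral_const_mul' _ _ ENNReal.ofNat_ne_top,
      ← lintegral_add_left (f := fun x => ENNReal.ofReal √(c γ x) * u (γ⁻¹ • x) ^ 2)
        ((hsqrt γ).mul ((hu_comp γ).pow_const 2))]
    refine lintegral_mono fun x => ?_
    calc 2 * (ENNReal.ofReal √(c γ x) * (u (γ⁻¹ • x) * v x))
        = ENNReal.ofReal √(c γ x) * (2 * u (γ⁻¹ • x) * v x) := by ring
      _ ≤ ENNReal.ofReal √(c γ x) * (u (γ⁻¹ • x) ^ 2 + v x ^ 2) := by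
          gcongr; exact ENNReal.two_mul_le_add_sq _ _
      _ = _ := mul_add _ _ _
  calc 2 * ∑' γ, K γ * ∫⁻ x, ENNReal.ofReal √(c γ x) * (u (γ⁻¹ • x) * v x) ∂ν
      = ∑' γ, K γ * (2 * ∫⁻ x, ENNReal.ofReal √(c γ x) * (u (γ⁻¹ • x) * v x) ∂ν) := by
        rw [← ENNReal.tsum_mul_left]
        congr with γ
        ring
    _ ≤ ∑' γ, (K γ * ∫⁻ x, ENNReal.ofReal √(c γ x) * u (γ⁻¹ • x) ^ 2 ∂ν
          + K γ * ∫⁻ x, ENNReal.ofReal √(c γ x) * v x ^ 2 ∂ν) :=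
        ENNReal.tsum_le_tsum fun γ => (mul_le_mul_right (hpoint γ) _).trans_eq (mul_add _ _ _)
    _ ≤ A * ∫⁻ x, u x ^ 2 ∂ν + A * ∫⁻ x, v x ^ 2 ∂ν := by
        rw [ENNReal.tsum_add]
        exact add_le_add hu_sum (hA _ (hv.pow_const 2))
    _ = A * (∫⁻ x, u x ^ 2 ∂ν + ∫⁻ x, v x ^ 2 ∂ν) := (mul_add _ _ _).symm

theorem enorm_inner_le_lintegral {γ : Γ} (h : IsRadonNikodymCocycle_s14 ν c)
    {T : Lp ℂ 2 ν →L[ℂ] Lp ℂ 2 ν}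
    (hT : ∀ ξ : Lp ℂ 2 ν, (T ξ : X → ℂ) =ᵐ[ν] fun x => (√(c γ x) : ℂ) * ξ (γ⁻¹ • x))
    {ξ η : Lp ℂ 2 ν} {u v : X → ℝ≥0∞} (hu : (‖ξ ·‖ₑ) =ᵐ[ν] u) (hv : (‖η ·‖ₑ) =ᵐ[ν] v) :
    ‖⟪T ξ, η⟫_ℂ‖ₑ ≤ ∫⁻ x, ENNReal.ofReal √(c γ x) * (u (γ⁻¹ • x) * v x) ∂ν := by
  refine (L2.enorm_inner_le_lintegral _ _).trans (lintegral_mono_ae ?_)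
  filter_upwards [hT ξ, (h.quasiMeasurePreserving_smul_s14 γ⁻¹).ae_eq hu, hv] with x hTx hux hvx
  simp only [Function.comp_apply] at hux
  rw [hTx, enorm_mul, ← hux, ← hvx, ← ofReal_norm, Complex.norm_real,
    Real.norm_of_nonneg (Real.sqrt_nonneg _), mul_assoc]

theorem two_mul_enorm_inner_sum_le [SigmaFinite ν] (h : IsRadonNikodymCocycle_s14 ν c)
    {K : Γ → ℝ≥0∞} (hK : ∀ γ, K γ⁻¹ = K γ) {A : ℝ≥0∞}
    (hA : ∀ ξ : X → ℝ≥0∞, Measurable ξ →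
      ∑' γ, K γ * ∫⁻ x, ENNReal.ofReal √(c γ x) * ξ x ∂ν ≤ A * ∫⁻ x, ξ x ∂ν)
    {π : Γ → (Lp ℂ 2 ν →L[ℂ] Lp ℂ 2 ν)}
    (hπ : ∀ (γ : Γ) (ξ : Lp ℂ 2 ν),
      (π γ ξ : X → ℂ) =ᵐ[ν] fun x => (√(c γ x) : ℂ) * ξ (γ⁻¹ • x))
    {f : Γ → ℂ} {M : ℝ≥0∞} (hf : ∀ γ, ‖f γ‖ₑ ≤ M * K γ) (s : Finset Γ) (ξ η : Lp ℂ 2 ν) :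
    2 * ‖⟪(∑ γ ∈ s, f γ • π γ) ξ, η⟫_ℂ‖ₑ ≤ A * M * (‖ξ‖ₑ ^ 2 + ‖η‖ₑ ^ 2) := by
  obtain ⟨u, hu, hξu⟩ := (Lp.aestronglyMeasurable ξ).enorm
  obtain ⟨v, hv, hηv⟩ := (Lp.aestronglyMeasurable η).enorm
  have hnorm : ∀ (ζ : Lp ℂ 2 ν) {w : X → ℝ≥0∞}, (‖ζ ·‖ₑ) =ᵐ[ν] w →
      ‖ζ‖ₑ ^ 2 = ∫⁻ x, w x ^ 2 ∂ν := fun ζ w hw => by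
    rw [Lp.enorm_sq_eq_lintegral]
    exact lintegral_congr_ae (hw.fun_comp (· ^ 2))
  calc 2 * ‖⟪(∑ γ ∈ s, f γ • π γ) ξ, η⟫_ℂ‖ₑ
      ≤ 2 * ∑ γ ∈ s, ‖f γ‖ₑ * ‖⟪π γ ξ, η⟫_ℂ‖ₑ := by
        rw [sum_apply, sum_inner]
        gcongr
        refine (enorm_sum_le _ _).trans_eq (Finset.sum_congr rfl fun γ _ => ?_)
        rw [smul_apply, inner_smul_left, enorm_mul, RCLike.enorm_conj]
    _ ≤ 2 * ∑ γ ∈ s, M * K γ * ∫⁻ x, ENNReal.ofReal √(c γ x) * (u (γ⁻¹ • x) * v x) ∂ν := by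
        gcongr with γ
        exacts [hf γ, h.enorm_inner_le_lintegral (hπ γ) hξu hηv]
    _ ≤ M * (2 * ∑' γ, K γ * ∫⁻ x, ENNReal.ofReal √(c γ x) * (u (γ⁻¹ • x) * v x) ∂ν) := by
        simp only [mul_assoc, ← Finset.mul_sum]
        rw [mul_left_comm]
        gcongr
        exact ENNReal.sum_le_tsum _
    _ ≤ M * (A * (∫⁻ x, u x ^ 2 ∂ν + ∫⁻ x, v x ^ 2 ∂ν)) :=
        mul_le_mul_right (h.two_mul_tsum_lintegral_le hK hA hu hv) M
    _ = A * M * (‖ξ‖ₑ ^ 2 + ‖η‖ₑ ^ 2) := by rw [hnorm ξ hξu, hnorm η hηv, mul_left_comm, mul_assoc]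

end IsRadonNikodymCocycle_s14

theorem boundary_representation_operator_norm_bound_general
    {Γ : Type*} [Group Γ]
    {X : Type*} [MeasurableSpace X] [MulAction Γ X]
    (ν : Measure X) [IsProbabilityMeasure ν]
    (hact : ∀ γ : Γ, Measurable (fun x : X => γ • x))
    (c : Γ → X → ℝ)
    (hc_meas : ∀ γ : Γ, Measurable (c γ))
    (hc : ∀ γ : Γ, Measure.map (fun x : X => γ • x) ν
        = ν.withDensity (fun x => ENNReal.ofReal (c γ x)))
    (Ξ : Γ → ℝ) (hΞ : ∀ γ : Γ, Ξ γ = ∫ x, Real.sqrt (c γ x) ∂ν)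
    (L : Γ → ℝ) (hL_nonneg : ∀ γ, 0 ≤ L γ)
    (hL_inv : ∀ γ, L γ⁻¹ = L γ)
    (d : ℝ) (C : ℝ) (hC : 0 < C)
    (hstar : ∀ ξ : X → ℝ≥0∞, Measurable ξ →
      ∑' γ : Γ, ENNReal.ofReal (Ξ γ / (1 + L γ) ^ (2 * d))
          * ∫⁻ x, ENNReal.ofReal (Real.sqrt (c γ x)) * ξ x ∂ν
        ≤ ENNReal.ofReal C * ∫⁻ x, ξ x ∂ν)
    (π : Γ → (Lp ℂ 2 ν →L[ℂ] Lp ℂ 2 ν))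
    (hπ : ∀ (γ : Γ) (ξ : Lp ℂ 2 ν),
      (π γ ξ : X → ℂ) =ᵐ[ν]
        fun x => (Real.sqrt (c γ x) : ℂ) * (ξ : X → ℂ) (γ⁻¹ • x))
    (f : Γ → ℂ) (hf : f.support.Finite) :
    ‖∑ γ ∈ hf.toFinset, f γ • π γ‖
      ≤ C * ⨆ γ : Γ, ‖f γ‖ * (1 + L γ) ^ (2 * d) / Ξ γ := by
  have h : IsRadonNikodymCocycle_s14 ν c := ⟨hact, hc_meas, hc⟩
  have hΞ_pos : ∀ γ, 0 < Ξ γ := fun γ => hΞ γ ▸ h.integral_sqrt_density_pos γ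
  have hP : ∀ γ, 0 < (1 + L γ) ^ (2 * d) :=
    fun γ => Real.rpow_pos_of_pos (by linarith [hL_nonneg γ]) _
  have hK : ∀ γ, ENNReal.ofReal (Ξ γ⁻¹ / (1 + L γ⁻¹) ^ (2 * d))
      = ENNReal.ofReal (Ξ γ / (1 + L γ) ^ (2 * d)) := fun γ => by
    rw [hΞ, hΞ, h.integral_sqrt_density_inv, hL_inv]
  have hS : 0 ≤ ⨆ γ : Γ, ‖f γ‖ * (1 + L γ) ^ (2 * d) / Ξ γ :=
    Real.iSup_nonneg fun γ => div_nonneg (mul_nonneg (norm_nonneg _) (hP γ).le) (hΞ_pos γ).le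
  refine ContinuousLinearMap.opNorm_le_of_two_mul_enorm_inner_le _ (mul_nonneg hC.le hS)
    fun ξ η => ?_
  rw [ENNReal.ofReal_mul hC.le]
  exact h.two_mul_enorm_inner_sum_le hK hstar hπ
    (enorm_le_ofReal_iSup_mul_div hf hP hΞ_pos) hf.toFinset ξ η

/-- Abstract form of Theorem 1.2, Item (2), boundary representation version:
under hypothesis (★), for every finitely supported `f : Γ → ℂ` the operator
`π_ν(f) = Σ_γ f(γ) π_ν(γ)` on `L²(X, ν)` satisfies `‖π_ν(f)‖ ≤ C ‖f‖_{S^{2d}}`,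
where `‖f‖_{S^{2d}} = sup_γ |f(γ)|(1+L(γ))^{2d}/Ξ(γ)`. -/
theorem boundary_representation_operator_norm_bound
    {Γ : Type*} [Group Γ] [Countable Γ]
    {X : Type*} [MeasurableSpace X] [MulAction Γ X]
    (ν : Measure X) [IsProbabilityMeasure ν]
    (hact : ∀ γ : Γ, Measurable (fun x : X => γ • x))
    (c : Γ → X → ℝ)
    (hc_meas : ∀ γ : Γ, Measurable (c γ))
    (hc_pos : ∀ γ : Γ, ∀ᵐ x ∂ν, 0 < c γ x)
    (hc : ∀ γ : Γ, Measure.map (fun x : X => γ • x) ν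
        = ν.withDensity (fun x => ENNReal.ofReal (c γ x)))
    (Ξ : Γ → ℝ) (hΞ : ∀ γ : Γ, Ξ γ = ∫ x, Real.sqrt (c γ x) ∂ν)
    (L : Γ → ℝ) (hL_nonneg : ∀ γ, 0 ≤ L γ) (hL_one : L 1 = 0)
    (hL_inv : ∀ γ, L γ⁻¹ = L γ) (hL_sub : ∀ γ δ : Γ, L (γ * δ) ≤ L γ + L δ)
    (d : ℝ) (hd : 0 < d) (C : ℝ) (hC : 0 < C)
    (hstar : ∀ ξ : X → ℝ≥0∞, Measurable ξ →
      ∑' γ : Γ, ENNReal.ofReal (Ξ γ / (1 + L γ) ^ (2 * d))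
          * ∫⁻ x, ENNReal.ofReal (Real.sqrt (c γ x)) * ξ x ∂ν
        ≤ ENNReal.ofReal C * ∫⁻ x, ξ x ∂ν)
    (π : Γ → (Lp ℂ 2 ν →L[ℂ] Lp ℂ 2 ν))
    (hπ : ∀ (γ : Γ) (ξ : Lp ℂ 2 ν),
      (π γ ξ : X → ℂ) =ᵐ[ν]
        fun x => (Real.sqrt (c γ x) : ℂ) * (ξ : X → ℂ) (γ⁻¹ • x))
    (f : Γ → ℂ) (hf : f.support.Finite) :
    ‖∑ γ ∈ hf.toFinset, f γ • π γ‖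
      ≤ C * ⨆ γ : Γ, ‖f γ‖ * (1 + L γ) ^ (2 * d) / Ξ γ :=
  boundary_representation_operator_norm_bound_general ν hact c hc_meas hc Ξ hΞ L hL_nonneg hL_inv d
    C hC hstar π hπ f hf
end
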